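/- arXiv:1910.12608 — 10 statements merged into one kernel-verified Lean document; each statement's English description precedes it below -/
import Mathlib

section
/- Let n ≥ 1, let X ⊆ {0,1}^n be a nonempty finite set, let U ⊆ ℝ^n be a finite set written as a union U = U_1 ∪ … ∪ U_K of nonempty finite sets, and for each k ∈ {1,…,K} let x^k ∈ X minimize max_{c∈U_k} c^⊤x over x ∈ X. Suppose some part U_{k*} is a singleton {c*} and attains the maximum part value, i.e. min_{x∈X} max_{c∈U_k} c^⊤x ≤ min_{x∈X} (c*)^⊤x for all k ∈ {1,…,K}. Then the tuple (x^1,…,x^K) is optimal for the min-max-min problem: max_{c∈U} min_{k∈{1,…,K}} c^⊤x^k = min_{(y^1,…,y^K)∈X^K} max_{c∈U} min_k c^⊤y^k, and moreover this common value equals the lower bound max_{c∈U} min_{x∈X} c^⊤x. -/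
/-!
Write `val(y) = max_{c ∈ U} min_k c^⊤y^k` for `y ∈ X^K` and `LB = max_{c ∈ U} min_{x ∈ X} c^⊤x`.
Every tuple satisfies `LB ≤ val(y)`, since each `y^k` lies in `X`. For the heuristic tuple, a
scenario `c ∈ U_j` gives `min_k c^⊤x^k ≤ c^⊤x^j ≤ max_{U_j} ·^⊤x^j`, the min-max value of `U_j`
because `x^j` is optimal for it; by assumption that is at most `min_{x ∈ X} (c*)^⊤x ≤ LB`.
So `val(x) ≤ LB ≤ val(y)` for all `y`.
-/

open Finset

/-- The dot product `c^⊤x = ∑ i, c i * x i`. -/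
def dotProd {n : ℕ} (c x : Fin n → ℝ) : ℝ := ∑ i, c i * x i

variable {α β γ ι R : Type*} [LinearOrder R]

theorem sup'_inf'_le_sup'_inf'_of_forall_mem {U : Finset α} (hU : U.Nonempty) {X : Finset β}
    (hX : X.Nonempty) {s : Finset ι} (hs : s.Nonempty) (f : α → β → R) {ys : ι → β}
    (hys : ∀ k ∈ s, ys k ∈ X) :
    U.sup' hU (fun c => X.inf' hX (f c)) ≤ U.sup' hU (fun c => s.inf' hs fun k => f c (ys k)) :=
  sup'_mono_fun fun _ _ => le_inf' _ _ fun k hk => inf'_le _ (hys k hk)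

theorem sup'_biUnion_inf'_le [DecidableEq α] {s : Finset ι} (hs : s.Nonempty)
    {Usub : ι → Finset α} (hU : ∀ k, (Usub k).Nonempty) (hsU : (s.biUnion Usub).Nonempty)
    (f : α → β → R) (xs : ι → β) {B : R}
    (hB : ∀ j ∈ s, (Usub j).sup' (hU j) (fun c => f c (xs j)) ≤ B) :
    (s.biUnion Usub).sup' hsU (fun c => s.inf' hs fun k => f c (xs k)) ≤ B := by
  refine sup'_le _ _ fun c hc => ?_
  obtain ⟨j, hj, hcj⟩ := mem_biUnion.mp hc
  calc s.inf' hs (fun k => f c (xs k)) ≤ f c (xs j) := inf'_le _ hj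
    _ ≤ (Usub j).sup' (hU j) (fun c => f c (xs j)) := le_sup' (fun c => f c (xs j)) hcj
    _ ≤ B := hB j hj

theorem eq_inf'_and_eq_of_le_of_forall_le {S : Finset γ} (hS : S.Nonempty) {g : γ → R} {a : γ}
    (ha : a ∈ S) {L : R} (hle : g a ≤ L) (hge : ∀ b ∈ S, L ≤ g b) :
    g a = S.inf' hS g ∧ g a = L := by
  have hL : g a = L := le_antisymm hle (hge a ha)
  exact ⟨le_antisymm (le_inf' _ _ fun b hb => hL ▸ hge b hb) (inf'_le g ha), hL⟩

theorem partition_heuristic_optimal_general (n K : ℕ) (hK : 1 ≤ K)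
    [DecidableEq (Fin n → ℝ)]
    (X : Finset (Fin n → ℝ)) (hX : X.Nonempty)
    (Usub : Fin K → Finset (Fin n → ℝ)) (hU : ∀ k, (Usub k).Nonempty)
    (xs : Fin K → (Fin n → ℝ)) (hxsmem : ∀ k, xs k ∈ X)
    (hxsopt : ∀ k, ∀ y ∈ X,
      (Usub k).sup' (hU k) (fun c => dotProd c (xs k)) ≤
        (Usub k).sup' (hU k) (fun c => dotProd c y))
    (kstar : Fin K) (cstar : Fin n → ℝ) (hsingle : Usub kstar = {cstar})
    (hattain : ∀ k, (X.inf' hX fun y => (Usub k).sup' (hU k) fun c => dotProd c y) ≤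
      X.inf' hX fun y => dotProd cstar y) :
    ((Finset.univ.biUnion Usub).sup'
        (Finset.biUnion_nonempty.mpr ⟨⟨0, hK⟩, Finset.mem_univ _, hU _⟩)
        fun c => Finset.univ.inf' (Finset.univ_nonempty_iff.mpr ⟨⟨0, hK⟩⟩)
          fun k => dotProd c (xs k)) =
      ((Fintype.piFinset fun _ : Fin K => X).inf'
        (Fintype.piFinset_nonempty.mpr fun _ => hX)
        (fun ys => (Finset.univ.biUnion Usub).sup'
          (Finset.biUnion_nonempty.mpr ⟨⟨0, hK⟩, Finset.mem_univ _, hU _⟩)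
          fun c => Finset.univ.inf' (Finset.univ_nonempty_iff.mpr ⟨⟨0, hK⟩⟩)
            fun k => dotProd c (ys k))) ∧
    ((Finset.univ.biUnion Usub).sup'
        (Finset.biUnion_nonempty.mpr ⟨⟨0, hK⟩, Finset.mem_univ _, hU _⟩)
        fun c => Finset.univ.inf' (Finset.univ_nonempty_iff.mpr ⟨⟨0, hK⟩⟩)
          fun k => dotProd c (xs k)) =
      ((Finset.univ.biUnion Usub).sup'
        (Finset.biUnion_nonempty.mpr ⟨⟨0, hK⟩, Finset.mem_univ _, hU _⟩)
        fun c => X.inf' hX fun y => dotProd c y) := by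
  have hUne : (univ.biUnion Usub).Nonempty := biUnion_nonempty.mpr ⟨⟨0, hK⟩, mem_univ _, hU _⟩
  have hcstar : cstar ∈ univ.biUnion Usub :=
    mem_biUnion.mpr ⟨kstar, mem_univ _, hsingle ▸ mem_singleton_self cstar⟩
  have hcstar_le : (X.inf' hX fun y => dotProd cstar y) ≤
      (univ.biUnion Usub).sup' hUne fun c => X.inf' hX fun y => dotProd c y :=
    le_sup' (fun c => X.inf' hX fun y => dotProd c y) hcstar
  let val (ys : Fin K → Fin n → ℝ) : ℝ :=
    (univ.biUnion Usub).sup' hUne fun c => univ.inf' ⟨⟨0, hK⟩, mem_univ _⟩ fun k => dotProd c (ys k)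
  refine eq_inf'_and_eq_of_le_of_forall_le (g := val) _ (Fintype.mem_piFinset.mpr hxsmem) ?_ ?_
  · refine sup'_biUnion_inf'_le _ hU hUne _ xs fun j _ => ?_
    exact ((le_inf' _ _ (hxsopt j)).trans (hattain j)).trans hcstar_le
  · intro ys hys
    exact sup'_inf'_le_sup'_inf'_of_forall_mem _ _ _ _ fun k _ => Fintype.mem_piFinset.mp hys k

/-- optimality certificate for the partition-based heuristic.  If the
part of the partition with largest min-max value is a singleton `{c*}`, then the
heuristic tuple `(x^1,…,x^K)` is optimal for the min-max-min problem, and the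
optimal value equals the max-min lower bound. -/
theorem partition_heuristic_optimal (n K : ℕ) (hn : 1 ≤ n) (hK : 1 ≤ K)
    [DecidableEq (Fin n → ℝ)]
    (X : Finset (Fin n → ℝ)) (hX : X.Nonempty)
    (hXbin : ∀ x ∈ X, ∀ i, x i = 0 ∨ x i = 1)
    (Usub : Fin K → Finset (Fin n → ℝ)) (hU : ∀ k, (Usub k).Nonempty)
    (xs : Fin K → (Fin n → ℝ)) (hxsmem : ∀ k, xs k ∈ X)
    (hxsopt : ∀ k, ∀ y ∈ X,
      (Usub k).sup' (hU k) (fun c => dotProd c (xs k)) ≤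
        (Usub k).sup' (hU k) (fun c => dotProd c y))
    (kstar : Fin K) (cstar : Fin n → ℝ) (hsingle : Usub kstar = {cstar})
    (hattain : ∀ k, (X.inf' hX fun y => (Usub k).sup' (hU k) fun c => dotProd c y) ≤
      X.inf' hX fun y => dotProd cstar y) :
    ((Finset.univ.biUnion Usub).sup'
        (Finset.biUnion_nonempty.mpr ⟨⟨0, hK⟩, Finset.mem_univ _, hU _⟩)
        fun c => Finset.univ.inf' (Finset.univ_nonempty_iff.mpr ⟨⟨0, hK⟩⟩)
          fun k => dotProd c (xs k)) =
      ((Fintype.piFinset fun _ : Fin K => X).inf'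
        (Fintype.piFinset_nonempty.mpr fun _ => hX)
        (fun ys => (Finset.univ.biUnion Usub).sup'
          (Finset.biUnion_nonempty.mpr ⟨⟨0, hK⟩, Finset.mem_univ _, hU _⟩)
          fun c => Finset.univ.inf' (Finset.univ_nonempty_iff.mpr ⟨⟨0, hK⟩⟩)
            fun k => dotProd c (ys k))) ∧
    ((Finset.univ.biUnion Usub).sup'
        (Finset.biUnion_nonempty.mpr ⟨⟨0, hK⟩, Finset.mem_univ _, hU _⟩)
        fun c => Finset.univ.inf' (Finset.univ_nonempty_iff.mpr ⟨⟨0, hK⟩⟩)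
          fun k => dotProd c (xs k)) =
      ((Finset.univ.biUnion Usub).sup'
        (Finset.biUnion_nonempty.mpr ⟨⟨0, hK⟩, Finset.mem_univ _, hU _⟩)
        fun c => X.inf' hX fun y => dotProd c y) :=
  partition_heuristic_optimal_general n K hK X hX Usub hU xs hxsmem hxsopt kstar cstar hsingle
    hattain
end

section
/- Let n ≥ 1, K ≥ 1 be integers, let X be a nonempty finite family of nonempty subsets of {1,…,n} (identified with their characteristic vectors in {0,1}^n), let ĉ ∈ ℝ^n with ĉ_i ≥ 0 for all i, let M ∈ ℝ with M ≥ Σ_{i=1}^n ĉ_i, set the deviation vector d = (M,…,M) and the budget Γ = K−1, and let L ∈ ℝ with L < M. Then the min-max-min value min_{(x^1,…,x^K)∈X^K} max_{c∈U^{K−1}(ĉ,d)} min_{k∈{1,…,K}} c^⊤x^k is at most L if and only if there exist x^1,…,x^K ∈ X that are pairwise disjoint as subsets of {1,…,n} and satisfy ĉ^⊤x^k ≤ L for every k ∈ {1,…,K}. -/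
/-
Write `c_D = ĉ + M·1_D` for the scenario deviating on `D`, so `c_D(S) = ĉ(S) + M·|S ∩ D|`.
Since `0 ≤ ĉ(S)` and `L < M`, a solution `S` has `c_D(S) ≤ L` exactly when it avoids `D` and
`ĉ(S) ≤ L`. Hence the value is at most `L` iff some `K`-tuple has, for every set `D` of fewer
than `K` coordinates, a member avoiding `D` of nominal cost at most `L`. Disjoint members pass
this test by pigeonhole. Conversely, a set `D` made of one element of each member outside an
index set `s` has size at most `K - |s|` and meets every member outside `s`: with `s = {k}` this
forces `ĉ(x^k) ≤ L`, and with `s = {k, l}` and a common point of `x^k` and `x^l` added to `D`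
it rules out overlaps.
-/

open Finset

/-- The discrete budgeted uncertainty set
`U^Γ(ĉ,d) = { c : c i = ĉ i + δ i * d i, δ ∈ {0,1}^n, ∑ i, δ i ≤ Γ }`,
with the 0-1 vector `δ` identified with the set `D` of its nonzero coordinates. -/
noncomputable def budgetU (n : ℕ) (chat d : Fin n → ℝ) (Γ : ℕ) : Finset (Fin n → ℝ) :=
  (((Finset.univ : Finset (Fin n)).powerset.filter fun D => D.card ≤ Γ).image
    fun D i => chat i + (if i ∈ D then d i else 0))

lemma budgetU_nonempty (n : ℕ) (chat d : Fin n → ℝ) (Γ : ℕ) :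
    (budgetU n chat d Γ).Nonempty :=
  ⟨_, Finset.mem_image.mpr ⟨∅, by simp, rfl⟩⟩

lemma forall_mem_budgetU {n : ℕ} {chat d : Fin n → ℝ} {Γ : ℕ} {p : (Fin n → ℝ) → Prop} :
    (∀ c ∈ budgetU n chat d Γ, p c) ↔
      ∀ D : Finset (Fin n), #D ≤ Γ → p fun i => chat i + if i ∈ D then d i else 0 := by
  simp [budgetU]

section Cost

variable {α : Type*} [DecidableEq α]

lemma sum_add_ite_mem (f : α → ℝ) (M : ℝ) (S D : Finset α) :
    ∑ i ∈ S, (f i + if i ∈ D then M else 0) = ∑ i ∈ S, f i + #(S ∩ D) * M := by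
  rw [sum_add_distrib, sum_ite_mem, sum_const, nsmul_eq_mul]

lemma sum_add_ite_mem_le_iff {f : α → ℝ} (hf : ∀ i, 0 ≤ f i) {M L : ℝ} (hM : 0 ≤ M)
    (hL : L < M) (S D : Finset α) :
    ∑ i ∈ S, (f i + if i ∈ D then M else 0) ≤ L ↔ Disjoint S D ∧ ∑ i ∈ S, f i ≤ L := by
  rw [sum_add_ite_mem, disjoint_iff_inter_eq_empty]
  rcases (S ∩ D).eq_empty_or_nonempty with hSD | hSD
  · simp [hSD]
  · have hcard : (1 : ℝ) ≤ #(S ∩ D) := by exact_mod_cast hSD.card_pos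
    have : M ≤ #(S ∩ D) * M := le_mul_of_one_le_left hM hcard
    have : 0 ≤ ∑ i ∈ S, f i := sum_nonneg fun i _ => hf i
    simp only [hSD.ne_empty, false_and, iff_false, not_le]
    linarith

end Cost

section Transversal

variable {ι α : Type*} [Fintype ι] [DecidableEq α] {xs : ι → Finset α}

lemma exists_disjoint_of_card_lt (hxs : Pairwise (Function.onFun Disjoint xs)) {D : Finset α}
    (hD : #D < Fintype.card ι) : ∃ k, Disjoint (xs k) D := by
  by_contra! hmeet
  choose g hgx hgD using fun k => not_disjoint_iff.mp (hmeet k)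
  obtain ⟨k, -, l, -, hkl, hg⟩ :=
    exists_ne_map_eq_of_card_lt_of_maps_to (s := univ) (by simpa using hD)
      fun k _ => hgD k
  exact not_disjoint_iff.mpr ⟨g k, hgx k, hg ▸ hgx l⟩ (hxs hkl)

lemma exists_card_le_forall_not_disjoint [DecidableEq ι] (hne : ∀ k, (xs k).Nonempty)
    (s : Finset ι) :
    ∃ D : Finset α, #D ≤ Fintype.card ι - #s ∧ ∀ m ∉ s, ¬Disjoint (xs m) D := by
  choose e he using hne
  refine ⟨sᶜ.image e, card_compl s ▸ card_image_le, fun m hm => ?_⟩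
  exact not_disjoint_iff.mpr ⟨e m, he m, mem_image_of_mem e (mem_compl.mpr hm)⟩

lemma pairwise_disjoint_of_forall_card_lt [DecidableEq ι] (hne : ∀ k, (xs k).Nonempty)
    (h : ∀ D : Finset α, #D < Fintype.card ι → ∃ k, Disjoint (xs k) D) :
    Pairwise (Function.onFun Disjoint xs) := by
  intro k l hkl
  by_contra hoverlap
  obtain ⟨a, hak, hal⟩ := not_disjoint_iff.mp hoverlap
  obtain ⟨D, hDcard, hD⟩ := exists_card_le_forall_not_disjoint hne {k, l}
  rw [card_pair hkl] at hDcard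
  have hcard : 2 ≤ Fintype.card ι := by
    simpa [card_pair hkl] using card_le_univ ({k, l} : Finset ι)
  obtain ⟨m, hm⟩ := h (insert a D) (by have := card_insert_le a D; omega)
  have hmkl : m = k ∨ m = l := by
    by_contra hmkl
    exact hD m (by simpa using hmkl) (hm.mono_right (subset_insert a D))
  rcases hmkl with rfl | rfl
  · exact disjoint_left.mp hm hak (mem_insert_self a D)
  · exact disjoint_left.mp hm hal (mem_insert_self a D)

lemma of_forall_card_lt_exists_disjoint [DecidableEq ι] (hne : ∀ k, (xs k).Nonempty)
    {p : ι → Prop} (h : ∀ D : Finset α, #D < Fintype.card ι → ∃ k, Disjoint (xs k) D ∧ p k)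
    (k : ι) : p k := by
  obtain ⟨D, hDcard, hD⟩ := exists_card_le_forall_not_disjoint hne {k}
  rw [card_singleton] at hDcard
  have hcard : 0 < Fintype.card ι := Fintype.card_pos_iff.mpr ⟨k⟩
  obtain ⟨m, hm, hpm⟩ := h D (by omega)
  have hmk : m = k := by
    by_contra hmk
    exact hD m (by simpa using hmk) hm
  exact hmk ▸ hpm

lemma forall_card_lt_exists_disjoint_iff [DecidableEq ι] (hne : ∀ k, (xs k).Nonempty)
    (p : ι → Prop) :
    (∀ D : Finset α, #D < Fintype.card ι → ∃ k, Disjoint (xs k) D ∧ p k) ↔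
      Pairwise (Function.onFun Disjoint xs) ∧ ∀ k, p k := by
  refine ⟨fun h => ⟨?_, of_forall_card_lt_exists_disjoint hne h⟩, ?_⟩
  · exact pairwise_disjoint_of_forall_card_lt hne fun D hD => (h D hD).imp fun _ => And.left
  · rintro ⟨hxs, hp⟩ D hD
    obtain ⟨k, hk⟩ := exists_disjoint_of_card_lt hxs hD
    exact ⟨k, hk, hp k⟩

end Transversal

theorem minmaxmin_le_iff_disjoint_general (n K : ℕ) (hK : 1 ≤ K)
    (X : Finset (Finset (Fin n))) (hX : X.Nonempty)
    (hXne : ∀ S ∈ X, S.Nonempty)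
    (chat : Fin n → ℝ) (hchat : ∀ i, 0 ≤ chat i)
    (M : ℝ) (hM : ∑ i, chat i ≤ M)
    (L : ℝ) (hL : L < M) :
    ((Fintype.piFinset fun _ : Fin K => X).inf'
        (Fintype.piFinset_nonempty.mpr fun _ => hX)
        fun xs => (budgetU n chat (fun _ => M) (K - 1)).sup' (budgetU_nonempty _ _ _ _)
          fun c => Finset.univ.inf' (Finset.univ_nonempty_iff.mpr ⟨⟨0, hK⟩⟩)
            fun k => ∑ i ∈ xs k, c i) ≤ L ↔
    ∃ xs : Fin K → Finset (Fin n), (∀ k, xs k ∈ X) ∧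
      (∀ k l, k ≠ l → Disjoint (xs k) (xs l)) ∧
      ∀ k, (∑ i ∈ xs k, chat i) ≤ L := by
  have hM0 : 0 ≤ M := (sum_nonneg fun i _ => hchat i).trans hM
  simp only [inf'_le_iff, sup'_le_iff, forall_mem_budgetU, mem_univ, true_and,
    sum_add_ite_mem_le_iff hchat hM0 hL, Nat.le_sub_one_iff_lt hK, Fintype.mem_piFinset]
  refine exists_congr fun xs => and_congr_right fun hxs => ?_
  have key := forall_card_lt_exists_disjoint_iff (fun k => hXne _ (hxs k))
    fun k => ∑ i ∈ xs k, chat i ≤ L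
  rwa [Fintype.card_fin] at key

/-- for a family `X` of nonempty subsets of `[n]`, nonnegative nominal
costs `ĉ`, uniform deviations `M ≥ ∑ ĉ`, budget `Γ = K - 1` and any threshold
`L < M`, the min-max-min value is at most `L` iff there are `K` pairwise disjoint
feasible solutions each of nominal cost at most `L`. -/
theorem minmaxmin_le_iff_disjoint (n K : ℕ) (hn : 1 ≤ n) (hK : 1 ≤ K)
    (X : Finset (Finset (Fin n))) (hX : X.Nonempty)
    (hXne : ∀ S ∈ X, S.Nonempty)
    (chat : Fin n → ℝ) (hchat : ∀ i, 0 ≤ chat i)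
    (M : ℝ) (hM : ∑ i, chat i ≤ M)
    (L : ℝ) (hL : L < M) :
    ((Fintype.piFinset fun _ : Fin K => X).inf'
        (Fintype.piFinset_nonempty.mpr fun _ => hX)
        fun xs => (budgetU n chat (fun _ => M) (K - 1)).sup' (budgetU_nonempty _ _ _ _)
          fun c => Finset.univ.inf' (Finset.univ_nonempty_iff.mpr ⟨⟨0, hK⟩⟩)
            fun k => ∑ i ∈ xs k, c i) ≤ L ↔
    ∃ xs : Fin K → Finset (Fin n), (∀ k, xs k ∈ X) ∧
      (∀ k l, k ≠ l → Disjoint (xs k) (xs l)) ∧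
      ∀ k, (∑ i ∈ xs k, chat i) ≤ L :=
  minmaxmin_le_iff_disjoint_general n K hK X hX hXne chat hchat M hM L hL
end

section
/- Let n ≥ 1 and a : {1,…,n} → ℕ with M := Σ_{i=1}^n a_i > 0. Consider the min-max-min problem with feasible set X = {0,1}^n, nominal costs ĉ_i = −a_i, deviations d_i = M for all i, budget Γ = 1 and K = 2 solutions. Then min over (x^1,x^2) ∈ X² of max over c ∈ U^1(ĉ,d) of min(c^⊤x^1, c^⊤x^2) equals −M/2 if and only if there exists a subset S ⊆ {1,…,n} with Σ_{i∈S} a_i = Σ_{i∉S} a_i. -/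
/-!
Write `w(S)` for the weight of `S` and `c_D` for the scenario raising the costs on `D`, so that
`c_D(S) = -w(S) + |S ∩ D| M`. The adversary can always push both `c_D(S)` and `c_D(T)` up to at
least `-M/2`: with `D = ∅` if `S` and `T` are both light (weight at most `M/2`), and otherwise with
`D = {j}` for some `j` lying in every heavy one of them, since two heavy sets intersect. The value
`-M/2` can only be attained at a set of weight exactly `M/2`; conversely, for a balanced partition
`(S, Sᶜ)` every scenario of budget one misses `S` or `Sᶜ`, and leaves that side at `-M/2`.
-/

open Finset

variable {n : ℕ}

lemma mem_budgetU {chat d : Fin n → ℝ} {Γ : ℕ} {c : Fin n → ℝ} :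
    c ∈ budgetU n chat d Γ ↔
      ∃ D : Finset (Fin n), D.card ≤ Γ ∧ (fun i => chat i + if i ∈ D then d i else 0) = c := by
  simp [budgetU]

noncomputable def worstCaseMin (chat d : Fin n → ℝ) (Γ : ℕ) (S T : Finset (Fin n)) : ℝ :=
  (budgetU n chat d Γ).sup' (budgetU_nonempty _ _ _ _)
    fun c => min (∑ i ∈ S, c i) (∑ i ∈ T, c i)

section Reduction

variable (w : Fin n → ℝ) (M : ℝ)

lemma sum_neg_add_ite (S D : Finset (Fin n)) :
    ∑ i ∈ S, (-w i + if i ∈ D then M else 0) = -∑ i ∈ S, w i + #(S ∩ D) * M := by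
  rw [sum_add_distrib, sum_neg_distrib, ← sum_filter, filter_mem_eq_inter, sum_const,
    nsmul_eq_mul]

variable {w M} (hM : ∑ i, w i = M)
include hM

lemma worstCaseMin_compl_le {S : Finset (Fin n)} (hS : ∑ i ∈ S, w i = M / 2) :
    worstCaseMin (fun i => -w i) (fun _ => M) 1 S Sᶜ ≤ -M / 2 := by
  have hSc : ∑ i ∈ Sᶜ, w i = M / 2 := by linarith [sum_add_sum_compl S w]
  refine sup'_le _ _ fun c hc => ?_
  obtain ⟨D, hD, rfl⟩ := mem_budgetU.mp hc
  -- a scenario of budget one cannot hit both `S` and `Sᶜ`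
  by_cases hDS : #(S ∩ D) = 0
  · refine (min_le_left _ _).trans_eq ?_
    rw [sum_neg_add_ite, hDS, hS]
    ring
  · obtain ⟨j, hj⟩ := card_ne_zero.mp hDS
    have hDSc : #(Sᶜ ∩ D) = 0 := card_eq_zero.mpr <| eq_empty_of_forall_notMem fun k hk =>
      (mem_compl.mp (mem_inter.mp hk).1) <|
        card_le_one.mp hD k (mem_inter.mp hk).2 j (mem_inter.mp hj).2 ▸ (mem_inter.mp hj).1
    refine (min_le_right _ _).trans_eq ?_
    rw [sum_neg_add_ite, hDSc, hSc]
    ring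

variable (hw : 0 ≤ w)
include hw

lemma total_nonneg : 0 ≤ M := hM ▸ sum_nonneg fun i _ => hw i

lemma sum_le_total (S : Finset (Fin n)) : ∑ i ∈ S, w i ≤ M :=
  hM ▸ sum_le_sum_of_subset_of_nonneg (subset_univ S) fun i _ _ => hw i

lemma neg_half_le_sum_neg_add_ite_of_sum_le (S D : Finset (Fin n)) (hS : ∑ i ∈ S, w i ≤ M / 2) :
    -M / 2 ≤ ∑ i ∈ S, (-w i + if i ∈ D then M else 0) := by
  rw [sum_neg_add_ite]
  nlinarith [(#(S ∩ D)).cast_nonneg (α := ℝ), total_nonneg hM hw]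

lemma neg_half_le_sum_neg_add_ite_of_mem {S : Finset (Fin n)} {j : Fin n} (hj : j ∈ S) :
    -M / 2 ≤ ∑ i ∈ S, (-w i + if i ∈ ({j} : Finset (Fin n)) then M else 0) := by
  rw [sum_neg_add_ite, inter_singleton_of_mem hj, card_singleton, Nat.cast_one]
  linarith [sum_le_total hM hw S, total_nonneg hM hw]

lemma sum_eq_half_of_sum_neg_add_ite_eq {S D : Finset (Fin n)}
    (h : ∑ i ∈ S, (-w i + if i ∈ D then M else 0) = -M / 2) : ∑ i ∈ S, w i = M / 2 := by
  have hS0 : 0 ≤ ∑ i ∈ S, w i := sum_nonneg fun i _ => hw i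
  have hSM := sum_le_total hM hw S
  rw [sum_neg_add_ite] at h
  rcases Nat.eq_zero_or_pos #(S ∩ D) with h0 | h1
  · rw [h0, Nat.cast_zero] at h
    linarith
  · have : (1 : ℝ) ≤ #(S ∩ D) := by exact_mod_cast h1
    nlinarith

lemma inter_nonempty_of_half_lt_sum {S T : Finset (Fin n)} (hS : M / 2 < ∑ i ∈ S, w i)
    (hT : M / 2 < ∑ i ∈ T, w i) : (S ∩ T).Nonempty := by
  rw [nonempty_iff_ne_empty]
  intro hST
  have := sum_union_inter (s₁ := S) (s₂ := T) (f := w)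
  rw [hST, sum_empty] at this
  linarith [sum_le_total hM hw (S ∪ T)]

lemma exists_mem_of_half_lt_sum {S : Finset (Fin n)} (hS : M / 2 < ∑ i ∈ S, w i)
    (T : Finset (Fin n)) : ∃ j ∈ S, M / 2 < ∑ i ∈ T, w i → j ∈ T := by
  by_cases hT : M / 2 < ∑ i ∈ T, w i
  · obtain ⟨j, hj⟩ := inter_nonempty_of_half_lt_sum hM hw hS hT
    exact ⟨j, (mem_inter.mp hj).1, fun _ => (mem_inter.mp hj).2⟩
  · rcases S.eq_empty_or_nonempty with rfl | ⟨j, hj⟩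
    · linarith [sum_empty (f := w), total_nonneg hM hw]
    · exact ⟨j, hj, fun h => absurd h hT⟩

lemma exists_scenario_neg_half_le (S T : Finset (Fin n)) :
    ∃ D : Finset (Fin n), D.card ≤ 1 ∧
      -M / 2 ≤ ∑ i ∈ S, (-w i + if i ∈ D then M else 0) ∧
      -M / 2 ≤ ∑ i ∈ T, (-w i + if i ∈ D then M else 0) := by
  wlog hS : M / 2 < ∑ i ∈ S, w i generalizing S T
  · by_cases hT : M / 2 < ∑ i ∈ T, w i
    · obtain ⟨D, hD, hDS, hDT⟩ := this T S hT
      exact ⟨D, hD, hDT, hDS⟩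
    · exact ⟨∅, by simp, neg_half_le_sum_neg_add_ite_of_sum_le hM hw S ∅ (not_lt.mp hS),
        neg_half_le_sum_neg_add_ite_of_sum_le hM hw T ∅ (not_lt.mp hT)⟩
  obtain ⟨j, hjS, hjT⟩ := exists_mem_of_half_lt_sum hM hw hS T
  refine ⟨{j}, by simp, neg_half_le_sum_neg_add_ite_of_mem hM hw hjS, ?_⟩
  by_cases hT : M / 2 < ∑ i ∈ T, w i
  · exact neg_half_le_sum_neg_add_ite_of_mem hM hw (hjT hT)
  · exact neg_half_le_sum_neg_add_ite_of_sum_le hM hw T _ (not_lt.mp hT)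

lemma neg_half_le_worstCaseMin (S T : Finset (Fin n)) :
    -M / 2 ≤ worstCaseMin (fun i => -w i) (fun _ => M) 1 S T := by
  obtain ⟨D, hD, hDS, hDT⟩ := exists_scenario_neg_half_le hM hw S T
  exact (le_min hDS hDT).trans (le_sup' (fun c => min (∑ i ∈ S, c i) (∑ i ∈ T, c i))
    (mem_budgetU.mpr ⟨D, hD, rfl⟩))

lemma sum_eq_half_of_worstCaseMin_eq {S T : Finset (Fin n)}
    (h : worstCaseMin (fun i => -w i) (fun _ => M) 1 S T = -M / 2) :
    ∑ i ∈ S, w i = M / 2 ∨ ∑ i ∈ T, w i = M / 2 := by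
  obtain ⟨c, hc, hmax⟩ := exists_mem_eq_sup' (budgetU_nonempty _ _ _ _)
    fun c => min (∑ i ∈ S, c i) (∑ i ∈ T, c i)
  obtain ⟨D, -, rfl⟩ := mem_budgetU.mp hc
  rw [worstCaseMin, hmax] at h
  rcases min_choice (∑ i ∈ S, (-w i + if i ∈ D then M else 0))
    (∑ i ∈ T, (-w i + if i ∈ D then M else 0)) with hmin | hmin <;> rw [hmin] at h
  · exact .inl (sum_eq_half_of_sum_neg_add_ite_eq hM hw h)
  · exact .inr (sum_eq_half_of_sum_neg_add_ite_eq hM hw h)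

end Reduction

theorem partition_reduction_general (n : ℕ) (a : Fin n → ℕ)
    (M : ℕ) (hM : M = ∑ i, a i) :
    ((Finset.univ : Finset (Finset (Fin n) × Finset (Fin n))).inf' univ_nonempty
        fun p => (budgetU n (fun i => -(a i : ℝ)) (fun _ => (M : ℝ)) 1).sup'
          (budgetU_nonempty _ _ _ _)
          fun c => min (∑ i ∈ p.1, c i) (∑ i ∈ p.2, c i)) = -(M : ℝ) / 2 ↔
    ∃ S : Finset (Fin n), ∑ i ∈ S, a i = ∑ i ∈ Sᶜ, a i := by
  have hw : (0 : Fin n → ℝ) ≤ fun i => (a i : ℝ) := fun i => Nat.cast_nonneg _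
  have hMw : ∑ i, (a i : ℝ) = M := by rw [hM, Nat.cast_sum]
  have half_iff (S : Finset (Fin n)) :
      ∑ i ∈ S, (a i : ℝ) = M / 2 ↔ ∑ i ∈ S, a i = ∑ i ∈ Sᶜ, a i := by
    rw [← @Nat.cast_inj ℝ, Nat.cast_sum, Nat.cast_sum, ← hMw, ← sum_add_sum_compl S]
    constructor <;> intro h <;> linarith
  change univ.inf' univ_nonempty (fun p : Finset (Fin n) × Finset (Fin n) =>
    worstCaseMin (fun i => -(a i : ℝ)) (fun _ => (M : ℝ)) 1 p.1 p.2) = -(M : ℝ) / 2 ↔ _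
  constructor
  · intro h
    obtain ⟨p, -, hp⟩ := exists_mem_eq_inf' univ_nonempty
      fun p : Finset (Fin n) × Finset (Fin n) => worstCaseMin (fun i => -(a i : ℝ)) _ 1 p.1 p.2
    rcases sum_eq_half_of_worstCaseMin_eq hMw hw (hp ▸ h) with hS | hS
    exacts [⟨_, (half_iff _).mp hS⟩, ⟨_, (half_iff _).mp hS⟩]
  · rintro ⟨S, hS⟩
    exact le_antisymm
      (inf'_le_of_le _ (mem_univ (S, Sᶜ)) (worstCaseMin_compl_le hMw ((half_iff S).mpr hS)))
      (le_inf' _ _ fun p _ => neg_half_le_worstCaseMin hMw hw p.1 p.2)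

/-- correctness of the reduction from the partition problem to the
min-max-min unconstrained binary problem with `ĉ = -a`, `d = M`, `Γ = 1`, `K = 2`. -/
theorem partition_reduction (n : ℕ) (hn : 1 ≤ n) (a : Fin n → ℕ)
    (M : ℕ) (hM : M = ∑ i, a i) (hMpos : 0 < M) :
    ((Finset.univ : Finset (Finset (Fin n) × Finset (Fin n))).inf' univ_nonempty
        fun p => (budgetU n (fun i => -(a i : ℝ)) (fun _ => (M : ℝ)) 1).sup'
          (budgetU_nonempty _ _ _ _)
          fun c => min (∑ i ∈ p.1, c i) (∑ i ∈ p.2, c i)) = -(M : ℝ) / 2 ↔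
    ∃ S : Finset (Fin n), ∑ i ∈ S, a i = ∑ i ∈ Sᶜ, a i :=
  partition_reduction_general n a M hM
end

section
/- Let n ≥ 2 be even and a : {1,…,n} → ℕ with M := Σ_{i=1}^n a_i > 0. Consider the min-max-min selection problem with feasible set X = { x ∈ {0,1}^n : Σ_i x_i = n/2 }, nominal costs ĉ_i = a_i, deviations d_i = M for all i, budget Γ = 1 and K = 2 solutions. Then min over (x^1,x^2) ∈ X² of max over c ∈ U^1(ĉ,d) of min(c^⊤x^1, c^⊤x^2) equals M/2 if and only if there exists a subset S ⊆ {1,…,n} with |S| = n/2 and Σ_{i∈S} a_i = M/2. -/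
open Finset

/-- The feasible set of the selection problem: all `p`-element subsets of `[n]`.
It is nonempty whenever `p ≤ n`. -/
lemma selection_nonempty (n p : ℕ) (h : p ≤ n) :
    (Finset.univ.filter fun S : Finset (Fin n) => S.card = p).Nonempty := by
  obtain ⟨t, -, ht⟩ := Finset.exists_subset_card_eq
    (s := (Finset.univ : Finset (Fin n))) (n := p) (by simpa using h)
  exact ⟨t, Finset.mem_filter.mpr ⟨Finset.mem_univ _, ht⟩⟩

/-!
Against a pair of half-size solutions sharing an item `j`, the adversary raises the cost of `j`
by `M` and both solutions cost at least `M`. Otherwise the pair is a partition `(S, Sᶜ)`; a single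
deviation hits only one side, and hitting an item of one side leaves the other at its nominal
cost, so the value is `max (a(S), a(Sᶜ)) ≥ M / 2`, with equality exactly when `a(S) = M / 2`.
-/

lemma mem_budgetU_one_iff {n : ℕ} {chat d c : Fin n → ℝ} :
    c ∈ budgetU n chat d 1 ↔ c = chat ∨ ∃ j, c = chat + Pi.single j (d j) := by
  simp only [budgetU, mem_image, mem_filter, mem_powerset, subset_univ, true_and,
    Nat.le_one_iff_eq_zero_or_eq_one, card_eq_zero, card_eq_one]
  constructor
  · rintro ⟨D, hD | ⟨j, rfl⟩, rfl⟩
    · subst hD; left; funext i; simp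
    · right; refine ⟨j, funext fun i => ?_⟩
      by_cases h : i = j <;> simp [h]
  · rintro (rfl | ⟨j, rfl⟩)
    · exact ⟨∅, Or.inl rfl, by funext i; simp⟩
    · refine ⟨{j}, Or.inr ⟨j, rfl⟩, funext fun i => ?_⟩
      by_cases h : i = j <;> simp [h]

lemma sum_add_pi_single {ι R : Type*} [DecidableEq ι] [AddCommMonoid R] (f : ι → R) (j : ι)
    (x : R) (S : Finset ι) :
    ∑ i ∈ S, (f + Pi.single j x : ι → R) i = ∑ i ∈ S, f i + if j ∈ S then x else 0 := by
  simp only [Pi.add_apply, sum_add_distrib, sum_pi_single']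

section MaxMinCost

variable {n : ℕ} (chat d : Fin n → ℝ)

noncomputable def maxMinCost (Γ : ℕ) (S₁ S₂ : Finset (Fin n)) : ℝ :=
  (budgetU n chat d Γ).sup' (budgetU_nonempty _ _ _ _)
    fun c => min (∑ i ∈ S₁, c i) (∑ i ∈ S₂, c i)

variable {chat d}

lemma min_le_maxMinCost_one (S₁ S₂ : Finset (Fin n)) (j : Fin n) :
    min (∑ i ∈ S₁, chat i + if j ∈ S₁ then d j else 0)
        (∑ i ∈ S₂, chat i + if j ∈ S₂ then d j else 0) ≤ maxMinCost chat d 1 S₁ S₂ := by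
  have hmem : chat + Pi.single j (d j) ∈ budgetU n chat d 1 :=
    mem_budgetU_one_iff.2 (Or.inr ⟨j, rfl⟩)
  have := le_sup' (fun c => min (∑ i ∈ S₁, c i) (∑ i ∈ S₂, c i)) hmem
  rwa [sum_add_pi_single, sum_add_pi_single] at this

/-- A single deviation cannot raise the cost of two disjoint solutions at once. -/
lemma maxMinCost_one_le_of_disjoint {S₁ S₂ : Finset (Fin n)} (h : Disjoint S₁ S₂) :
    maxMinCost chat d 1 S₁ S₂ ≤ max (∑ i ∈ S₁, chat i) (∑ i ∈ S₂, chat i) := by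
  refine sup'_le _ _ fun c hc => ?_
  rcases mem_budgetU_one_iff.1 hc with rfl | ⟨j, rfl⟩
  · exact (min_le_left _ _).trans (le_max_left _ _)
  · simp only [sum_add_pi_single]
    by_cases hj : j ∈ S₁
    · rw [if_neg (disjoint_left.1 h hj), add_zero]
      exact (min_le_right _ _).trans (le_max_right _ _)
    · rw [if_neg hj, add_zero]
      exact (min_le_left _ _).trans (le_max_left _ _)

lemma le_maxMinCost_of_not_disjoint (hc : ∀ i, 0 ≤ chat i) (M : ℝ) {S₁ S₂ : Finset (Fin n)}
    (h : ¬Disjoint S₁ S₂) :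
    M ≤ maxMinCost chat (fun _ => M) 1 S₁ S₂ := by
  obtain ⟨j, hj₁, hj₂⟩ := not_disjoint_iff.1 h
  have h₁ : 0 ≤ ∑ i ∈ S₁, chat i := sum_nonneg fun i _ => hc i
  have h₂ : 0 ≤ ∑ i ∈ S₂, chat i := sum_nonneg fun i _ => hc i
  have := min_le_maxMinCost_one (chat := chat) (d := fun _ => M) S₁ S₂ j
  simp only [hj₁, hj₂, if_true] at this
  exact (le_min (by linarith) (by linarith)).trans this

end MaxMinCost

section Reduction

variable {n : ℕ} {chat : Fin n → ℝ} {M : ℝ}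

lemma maxMinCost_one_compl (hc : ∀ i, 0 ≤ chat i) (hM : ∑ i, chat i = M)
    {S : Finset (Fin n)} (hS : S.Nonempty) (hSc : Sᶜ.Nonempty) :
    maxMinCost chat (fun _ => M) 1 S Sᶜ = max (∑ i ∈ S, chat i) (∑ i ∈ Sᶜ, chat i) := by
  have hsum : ∑ i ∈ S, chat i + ∑ i ∈ Sᶜ, chat i = M := by rw [sum_add_sum_compl, hM]
  have h₁ : 0 ≤ ∑ i ∈ S, chat i := sum_nonneg fun i _ => hc i
  have h₂ : 0 ≤ ∑ i ∈ Sᶜ, chat i := sum_nonneg fun i _ => hc i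
  refine le_antisymm (maxMinCost_one_le_of_disjoint disjoint_compl_right) (max_le ?_ ?_)
  · obtain ⟨j, hj⟩ := hSc
    have := min_le_maxMinCost_one (chat := chat) (d := fun _ => M) S Sᶜ j
    rwa [if_neg (mem_compl.1 hj), if_pos hj, add_zero, min_eq_left (by linarith)] at this
  · obtain ⟨j, hj⟩ := hS
    have := min_le_maxMinCost_one (chat := chat) (d := fun _ => M) S Sᶜ j
    rwa [if_pos hj, if_neg (notMem_compl.2 hj), add_zero, min_eq_right (by linarith)] at this

lemma card_compl_of_card_eq_half (heven : Even n) {S : Finset (Fin n)} (h : #S = n / 2) :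
    #Sᶜ = n / 2 := by
  obtain ⟨m, rfl⟩ := heven
  rw [card_compl, Fintype.card_fin, h]
  omega

lemma le_maxMinCost_or_eq_compl (hc : ∀ i, 0 ≤ chat i) (hM : ∑ i, chat i = M)
    (hn : 2 ≤ n) (heven : Even n) {S₁ S₂ : Finset (Fin n)} (h₁ : #S₁ = n / 2)
    (h₂ : #S₂ = n / 2) :
    M ≤ maxMinCost chat (fun _ => M) 1 S₁ S₂ ∨
      S₂ = S₁ᶜ ∧
        maxMinCost chat (fun _ => M) 1 S₁ S₂ = max (∑ i ∈ S₁, chat i) (∑ i ∈ S₁ᶜ, chat i) := by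
  by_cases hdisj : Disjoint S₁ S₂
  · have hS₂ : S₂ = S₁ᶜ := (compl_eq_of_disjoint_of_card_add_eq hdisj (by
      rw [card_univ, Fintype.card_fin, h₁, h₂]; obtain ⟨m, rfl⟩ := heven; omega)).symm
    have hne : ∀ S : Finset (Fin n), #S = n / 2 → S.Nonempty := fun S h =>
      card_pos.1 (by omega)
    subst hS₂
    exact Or.inr ⟨rfl, maxMinCost_one_compl hc hM (hne _ h₁) (hne _ h₂)⟩
  · exact Or.inl (le_maxMinCost_of_not_disjoint hc M hdisj)

lemma half_le_maxMinCost (hc : ∀ i, 0 ≤ chat i) (hM : ∑ i, chat i = M) (hn : 2 ≤ n)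
    (heven : Even n) {S₁ S₂ : Finset (Fin n)} (h₁ : #S₁ = n / 2) (h₂ : #S₂ = n / 2) :
    M / 2 ≤ maxMinCost chat (fun _ => M) 1 S₁ S₂ := by
  have hsplit : ∑ i ∈ S₁, chat i + ∑ i ∈ S₁ᶜ, chat i = M := by rw [sum_add_sum_compl, hM]
  rcases le_maxMinCost_or_eq_compl hc hM hn heven h₁ h₂ with hle | ⟨-, hmax⟩
  · have : 0 ≤ M := hM ▸ sum_nonneg fun i _ => hc i
    linarith
  · obtain ⟨hS₁, hS₁c⟩ := max_le_iff.1 hmax.ge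
    linarith

lemma sum_eq_half_of_maxMinCost_eq_half (hc : ∀ i, 0 ≤ chat i) (hM : ∑ i, chat i = M)
    (hMpos : 0 < M) (hn : 2 ≤ n) (heven : Even n) {S₁ S₂ : Finset (Fin n)} (h₁ : #S₁ = n / 2)
    (h₂ : #S₂ = n / 2) (h : maxMinCost chat (fun _ => M) 1 S₁ S₂ = M / 2) :
    ∑ i ∈ S₁, chat i = M / 2 := by
  have hsplit : ∑ i ∈ S₁, chat i + ∑ i ∈ S₁ᶜ, chat i = M := by rw [sum_add_sum_compl, hM]
  rcases le_maxMinCost_or_eq_compl hc hM hn heven h₁ h₂ with hle | ⟨-, hmax⟩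
  · linarith
  · obtain ⟨hS₁, hS₁c⟩ := max_le_iff.1 hmax.ge
    linarith

theorem inf'_maxMinCost_eq_half_iff (hc : ∀ i, 0 ≤ chat i) (hM : ∑ i, chat i = M) (hMpos : 0 < M)
    (hn : 2 ≤ n) (heven : Even n) :
    ((univ.filter fun S : Finset (Fin n) => #S = n / 2) ×ˢ
        (univ.filter fun S : Finset (Fin n) => #S = n / 2)).inf'
        ((selection_nonempty n (n / 2) (Nat.div_le_self n 2)).product
          (selection_nonempty n (n / 2) (Nat.div_le_self n 2)))
        (fun p => maxMinCost chat (fun _ => M) 1 p.1 p.2) = M / 2 ↔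
    ∃ S : Finset (Fin n), #S = n / 2 ∧ ∑ i ∈ S, chat i = M / 2 := by
  have hne := selection_nonempty n (n / 2) (Nat.div_le_self n 2)
  constructor
  · intro h
    obtain ⟨⟨S₁, S₂⟩, hp, hval⟩ :=
      exists_mem_eq_inf' (hne.product hne) fun p => maxMinCost chat (fun _ => M) 1 p.1 p.2
    simp only [mem_product, mem_filter, mem_univ, true_and] at hp
    exact ⟨S₁, hp.1,
      sum_eq_half_of_maxMinCost_eq_half hc hM hMpos hn heven hp.1 hp.2 (hval.symm.trans h)⟩
  · rintro ⟨S, hS, hSsum⟩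
    have hSc : ∑ i ∈ Sᶜ, chat i = M / 2 := by
      linarith [sum_add_sum_compl S chat]
    refine le_antisymm ?_ (le_inf' _ _ fun p hp => ?_)
    · calc _ ≤ maxMinCost chat (fun _ => M) 1 S Sᶜ :=
            inf'_le _ (b := (S, Sᶜ)) (by simp [hS, card_compl_of_card_eq_half heven hS])
        _ ≤ max (∑ i ∈ S, chat i) (∑ i ∈ Sᶜ, chat i) :=
            maxMinCost_one_le_of_disjoint disjoint_compl_right
        _ = M / 2 := by rw [hSsum, hSc, max_self]
    · simp only [mem_product, mem_filter, mem_univ, true_and] at hp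
      exact half_le_maxMinCost hc hM hn heven hp.1 hp.2

end Reduction

/-- correctness of the reduction from the equal-cardinality partition
problem to the min-max-min selection problem with `p = n/2`, `ĉ = a`, `d = M`,
`Γ = 1` and `K = 2`. -/
theorem selection_partition_reduction (n : ℕ) (hn : 2 ≤ n) (hneven : Even n)
    (a : Fin n → ℕ) (M : ℕ) (hM : M = ∑ i, a i) (hMpos : 0 < M) :
    (((Finset.univ.filter fun S : Finset (Fin n) => S.card = n / 2) ×ˢ
        (Finset.univ.filter fun S : Finset (Fin n) => S.card = n / 2)).inf'
        ((selection_nonempty n (n / 2) (Nat.div_le_self n 2)).product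
          (selection_nonempty n (n / 2) (Nat.div_le_self n 2)))
        fun p => (budgetU n (fun i => (a i : ℝ)) (fun _ => (M : ℝ)) 1).sup'
          (budgetU_nonempty _ _ _ _)
          fun c => min (∑ i ∈ p.1, c i) (∑ i ∈ p.2, c i)) = (M : ℝ) / 2 ↔
    ∃ S : Finset (Fin n), S.card = n / 2 ∧ (∑ i ∈ S, (a i : ℝ)) = (M : ℝ) / 2 :=
  inf'_maxMinCost_eq_half_iff (fun i => (a i).cast_nonneg) (by rw [hM, Nat.cast_sum])
    (Nat.cast_pos.2 hMpos) hn hneven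
end

section
/- Let G be a simple graph on a finite vertex set V, let w assign to each edge of G a nonnegative real weight, let s ≠ t be vertices of G such that at least one s–t path exists in G, set M = Σ over all edges e of G of w(e), and let L ∈ ℝ with L < M. For an s–t path P, let E(P) denote its set of edges and w(P) = Σ_{e∈E(P)} w(e). Consider costs c_δ(P) = Σ_{e∈E(P)} (w(e) + δ_e·M) for δ ∈ {0,1}^{E(G)} with Σ_e δ_e ≤ 1. Then min over pairs (P,Q) of s–t paths in G of max over such δ of min(c_δ(P), c_δ(Q)) is at most L if and only if there exist two s–t paths P, Q in G with E(P) ∩ E(Q) = ∅, w(P) ≤ L and w(Q) ≤ L. -/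
/-!
With `M` the total weight, deviating an edge of a path makes it cost at least `M > L`, while
a path avoiding the deviated edge keeps its nominal weight. So a pair of paths is good against
every single deviation exactly when no edge lies on both paths (deviating a common edge would
ruin both) and each path has weight at most `L` (deviate an edge of the other path).
Conversely, a single deviated edge hits at most one of two edge-disjoint paths.
-/

open Finset

namespace Finset

variable {α : Type*} [DecidableEq α]

/-- The paper's `c_δ(S)`, with `δ` the indicator of `D`. -/
def deviatedWeight (w : α → ℝ) (M : ℝ) (D S : Finset α) : ℝ :=
  ∑ e ∈ S, (w e + if e ∈ D then M else 0)

variable {w : α → ℝ} {M L : ℝ} {D S T : Finset α} {e : α}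

theorem deviatedWeight_of_disjoint (h : Disjoint S D) :
    deviatedWeight w M D S = ∑ e ∈ S, w e :=
  sum_congr rfl fun e he => by rw [if_neg (disjoint_left.mp h he), add_zero]

theorem deviatedWeight_singleton_of_mem (he : e ∈ S) :
    deviatedWeight w M {e} S = ∑ e ∈ S, w e + M := by
  simp only [deviatedWeight, sum_add_distrib, mem_singleton, sum_ite_eq', if_pos he]

theorem le_deviatedWeight_singleton (hw : ∀ e ∈ S, 0 ≤ w e) (he : e ∈ S) :
    M ≤ deviatedWeight w M {e} S := by
  rw [deviatedWeight_singleton_of_mem he]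
  linarith [sum_nonneg hw]

theorem disjoint_or_disjoint_of_card_le_one (hST : Disjoint S T) (hD : D.card ≤ 1) :
    Disjoint S D ∨ Disjoint T D := by
  by_contra! h
  obtain ⟨a, haS, haD⟩ := not_disjoint_iff.mp h.1
  obtain ⟨b, hbT, hbD⟩ := not_disjoint_iff.mp h.2
  obtain rfl := card_le_one.mp hD a haD b hbD
  exact disjoint_left.mp hST haS hbT

theorem sum_le_of_min_deviatedWeight_singleton_le (hST : Disjoint S T)
    (hwT : ∀ e ∈ T, 0 ≤ w e) (he : e ∈ T) (hL : L < M)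
    (h : min (deviatedWeight w M {e} S) (deviatedWeight w M {e} T) ≤ L) :
    ∑ e ∈ S, w e ≤ L := by
  rw [deviatedWeight_of_disjoint (disjoint_singleton_right.mpr (disjoint_right.mp hST he))] at h
  have hMT : M ≤ deviatedWeight w M {e} T := le_deviatedWeight_singleton hwT he
  rcases min_le_iff.mp h with hle | hle <;> linarith

theorem forall_min_deviatedWeight_le_iff {E : Finset α} (hSE : S ⊆ E) (hTE : T ⊆ E)
    (hS : S.Nonempty) (hT : T.Nonempty) (hw : ∀ e ∈ E, 0 ≤ w e) (hL : L < M) :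
    (∀ D ∈ E.powerset.filter (·.card ≤ 1),
        min (deviatedWeight w M D S) (deviatedWeight w M D T) ≤ L) ↔
      Disjoint S T ∧ ∑ e ∈ S, w e ≤ L ∧ ∑ e ∈ T, w e ≤ L := by
  have hwS : ∀ e ∈ S, 0 ≤ w e := fun e he => hw e (hSE he)
  have hwT : ∀ e ∈ T, 0 ≤ w e := fun e he => hw e (hTE he)
  have hsingleton {e} (he : e ∈ E) : {e} ∈ E.powerset.filter (·.card ≤ 1) := by
    simpa using he
  constructor
  · intro h
    have hST : Disjoint S T := by
      refine disjoint_left.mpr fun e heS heT => ?_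
      have hMS : M ≤ deviatedWeight w M {e} S := le_deviatedWeight_singleton hwS heS
      have hMT : M ≤ deviatedWeight w M {e} T := le_deviatedWeight_singleton hwT heT
      rcases min_le_iff.mp (h {e} (hsingleton (hSE heS))) with hle | hle <;> linarith
    obtain ⟨eS, heS⟩ := hS
    obtain ⟨eT, heT⟩ := hT
    refine ⟨hST, ?_, ?_⟩
    · exact sum_le_of_min_deviatedWeight_singleton_le hST hwT heT hL (h _ (hsingleton (hTE heT)))
    · refine sum_le_of_min_deviatedWeight_singleton_le hST.symm hwS heS hL ?_
      rw [min_comm]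
      exact h _ (hsingleton (hSE heS))
  · rintro ⟨hST, hSL, hTL⟩ D hD
    rcases disjoint_or_disjoint_of_card_le_one hST (mem_filter.mp hD).2 with hSD | hTD
    · exact (min_le_left _ _).trans (deviatedWeight_of_disjoint hSD ▸ hSL)
    · exact (min_le_right _ _).trans (deviatedWeight_of_disjoint hTD ▸ hTL)

end Finset

namespace SimpleGraph.Walk

variable {V : Type*} {G : SimpleGraph V} {u v : V}

theorem edges_toFinset_subset_edgeFinset [DecidableEq V] [Fintype G.edgeSet] (p : G.Walk u v) :
    p.edges.toFinset ⊆ G.edgeFinset := fun _ he =>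
  mem_edgeFinset.mpr (p.edges_subset_edgeSet (List.mem_toFinset.mp he))

theorem edges_toFinset_nonempty_of_ne [DecidableEq V] (p : G.Walk u v) (huv : u ≠ v) :
    p.edges.toFinset.Nonempty :=
  (List.toFinset_nonempty_iff _).mpr (edges_eq_nil.not.mpr (not_nil_of_ne huv))

end SimpleGraph.Walk

/-- correctness of the reduction from the min-max two edge-disjoint
paths problem to the min-max-min shortest path problem with `Γ = 1` and `K = 2`:
with every edge's deviation equal to `M = ∑_e w(e)` and `L < M`, the min-max-min
value is at most `L` iff there are two edge-disjoint `s`–`t` paths of weight at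
most `L` each. -/
theorem minmaxmin_shortest_path_reduction {V : Type*} [Fintype V] [DecidableEq V]
    (G : SimpleGraph V) [DecidableRel G.Adj]
    (w : Sym2 V → ℝ) (hw : ∀ e ∈ G.edgeSet, 0 ≤ w e)
    (s t : V) (hst : s ≠ t) (hpath : Nonempty (G.Path s t))
    (L : ℝ) (hL : L < ∑ e ∈ G.edgeFinset, w e) :
    ((Finset.univ : Finset (G.Path s t × G.Path s t)).inf'
        (Finset.univ_nonempty_iff.mpr ⟨hpath.some, hpath.some⟩)
        fun pq => (G.edgeFinset.powerset.filter fun D => D.card ≤ 1).sup'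
          ⟨∅, by simp⟩
          fun D => min
            (∑ e ∈ pq.1.1.edges.toFinset,
              (w e + if e ∈ D then ∑ e' ∈ G.edgeFinset, w e' else 0))
            (∑ e ∈ pq.2.1.edges.toFinset,
              (w e + if e ∈ D then ∑ e' ∈ G.edgeFinset, w e' else 0))) ≤ L ↔
    ∃ P Q : G.Path s t,
      Disjoint P.1.edges.toFinset Q.1.edges.toFinset ∧
      (∑ e ∈ P.1.edges.toFinset, w e) ≤ L ∧
      (∑ e ∈ Q.1.edges.toFinset, w e) ≤ L := by
  simp only [inf'_le_iff, mem_univ, true_and, Prod.exists]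
  refine exists₂_congr fun P Q => (sup'_le_iff _ _).trans ?_
  exact forall_min_deviatedWeight_le_iff (P.1.edges_toFinset_subset_edgeFinset)
    (Q.1.edges_toFinset_subset_edgeFinset) (P.1.edges_toFinset_nonempty_of_ne hst)
    (Q.1.edges_toFinset_nonempty_of_ne hst) (fun e he => hw e (SimpleGraph.mem_edgeFinset.mp he)) hL
end

section
/- Let N ≥ 1, m ≥ 0 and Γ ≥ 0 be integers and let S_1,…,S_m ⊆ {1,…,N}. Define K = N vectors x^1,…,x^N ∈ {0,1}^m by x^k_i = 1 if k ∈ S_i and x^k_i = 0 otherwise. With nominal costs ĉ = 0 ∈ ℝ^m and deviations d = (1,…,1) ∈ ℝ^m, the worst-case cost max over c ∈ U^Γ(ĉ,d) of min over k ∈ {1,…,N} of c^⊤x^k is at least 1 if and only if there exists an index set I ⊆ {1,…,m} with |I| ≤ Γ and ⋃_{i∈I} S_i = {1,…,N}. -/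
/-! The scenario that raises the costs on a set `D` of at most `Γ` coordinates gives `x^k` the
cost `#{i ∈ D | k ∈ S i}`, which is at least `1` for every `k` exactly when the sets indexed by
`D` cover all of `{1,…,N}`. -/

open Finset

lemma exists_mem_budgetU_iff {n : ℕ} {chat d : Fin n → ℝ} {Γ : ℕ} {P : (Fin n → ℝ) → Prop} :
    (∃ c ∈ budgetU n chat d Γ, P c) ↔
      ∃ D : Finset (Fin n), D.card ≤ Γ ∧ P fun i => chat i + if i ∈ D then d i else 0 := by
  simp [budgetU]

lemma one_le_sum_indicator_mul_indicator_iff {ι : Type*} [Fintype ι] [DecidableEq ι] (D : Finset ι)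
    (p : ι → Prop) [DecidablePred p] :
    (1 : ℝ) ≤ ∑ i, (if i ∈ D then 1 else 0) * (if p i then 1 else 0) ↔ ∃ i ∈ D, p i := by
  have hsum : ∑ i, (if i ∈ D then (1 : ℝ) else 0) * (if p i then 1 else 0) =
      #{i ∈ D | p i} := by
    simp only [ite_mul, one_mul, zero_mul, sum_ite_mem, univ_inter, sum_boole]
  rw [hsum, Nat.one_le_cast, Nat.one_le_iff_ne_zero, Nat.ne_zero_iff_zero_lt, card_pos,
    filter_nonempty_iff]

/-- correctness of the reduction from set cover to evaluating the
objective function of the min-max-min problem.  With `x^k_i = 1` iff `k ∈ S i`,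
nominal costs `0` and unit deviations, the worst-case cost of `(x^1,…,x^N)` is at
least `1` iff at most `Γ` of the sets `S i` cover `{1,…,N}`. -/
theorem set_cover_reduction (N m Γ : ℕ) (hN : 1 ≤ N)
    (S : Fin m → Finset (Fin N)) :
    (1 : ℝ) ≤
      ((budgetU m (fun _ => 0) (fun _ => 1) Γ).sup' (budgetU_nonempty _ _ _ _)
        fun c => Finset.univ.inf' (Finset.univ_nonempty_iff.mpr ⟨⟨0, hN⟩⟩)
          fun k : Fin N => ∑ i, c i * (if k ∈ S i then 1 else 0)) ↔
    ∃ I : Finset (Fin m), I.card ≤ Γ ∧ I.biUnion S = Finset.univ := by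
  simp only [le_sup'_iff, exists_mem_budgetU_iff, le_inf'_iff, mem_univ, true_implies, zero_add,
    one_le_sum_indicator_mul_indicator_iff, eq_univ_iff_forall, mem_biUnion]
end

section
/- Let n ≥ 0 be an even integer, a : {1,…,n} → ℕ, and C = (Σ_{i=1}^n a_i)/2. Consider the robust max-min-max knapsack problem with feasible set X = { x ∈ {0,1}^n : Σ_i a_i x_i ≤ C }, profits c_i = 1 − n·δ_i for δ ∈ {0,1}^n with Σ_i δ_i ≤ 1 (i.e. nominal profits ĉ_i = 1, deviations d_i = −n, budget Γ = 1), and K = 2 solutions. Then max over (x^1,x^2) ∈ X² of min over admissible δ of max(Σ_i (1−n·δ_i)x^1_i, Σ_i (1−n·δ_i)x^2_i) is at least n/2 if and only if there exists a subset I ⊆ {1,…,n} with |I| = n/2 and Σ_{i∈I} a_i = Σ_{i∉I} a_i. -/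
/-!
Deviating a single item `j` drives the profit of every solution containing `j` down to at
most `0 < n / 2`. So a pair `(x, y)` guarantees `n / 2` exactly when `x` and `y` are disjoint
(deviate a common item) and each has at least `n / 2` items (deviate an item of the other
one), that is, when `y = xᶜ` and `|x| = n / 2`. Both `x` and `xᶜ` fit into the capacity
`(∑ a) / 2` exactly when they have equal weight.
-/

open Finset

lemma sum_one_sub_mul_ite_mem {α : Type*} [DecidableEq α] (c : ℝ) (x D : Finset α) :
    ∑ i ∈ x, ((1 : ℝ) - c * (if i ∈ D then 1 else 0)) = #x - c * #(x ∩ D) := by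
  rw [sum_sub_distrib, ← mul_sum, sum_ite_mem, sum_const, sum_const, nsmul_one, nsmul_one]

lemma sum_le_half_and_sum_compl_le_half_iff {α : Type*} [Fintype α] [DecidableEq α]
    (f : α → ℝ) (s : Finset α) :
    (∑ i ∈ s, f i ≤ (∑ i, f i) / 2 ∧ ∑ i ∈ sᶜ, f i ≤ (∑ i, f i) / 2) ↔
      ∑ i ∈ s, f i = ∑ i ∈ sᶜ, f i := by
  have htotal := sum_add_sum_compl s f
  constructor
  · rintro ⟨hs, hsc⟩
    linarith
  · intro h
    constructor <;> linarith

namespace RobustKnapsack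

open Fintype

variable {α : Type*} [Fintype α] [DecidableEq α]

/-- Nominal profits `1`, deviations `-n` with `n = card α`, deviated items `D`. -/
def deviatedProfit (x D : Finset α) : ℝ := #x - card α * #(x ∩ D)

lemma deviatedProfit_le_card (x D : Finset α) : deviatedProfit x D ≤ #x := by
  unfold deviatedProfit
  have : (0 : ℝ) ≤ card α * #(x ∩ D) := by positivity
  linarith

lemma deviatedProfit_of_disjoint {x D : Finset α} (h : Disjoint x D) :
    deviatedProfit x D = #x := by
  simp [deviatedProfit, disjoint_iff_inter_eq_empty.mp h]

lemma deviatedProfit_singleton_nonpos {x : Finset α} {j : α} (hj : j ∈ x) :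
    deviatedProfit x {j} ≤ 0 := by
  have hx : (#x : ℝ) ≤ card α := by exact_mod_cast card_le_univ x
  simp [deviatedProfit, inter_singleton_of_mem hj, hx]

def SecuresHalf (x y : Finset α) : Prop :=
  ∀ D : Finset α, #D ≤ 1 → (card α : ℝ) / 2 ≤ max (deviatedProfit x D) (deviatedProfit y D)

lemma SecuresHalf.symm {x y : Finset α} (h : SecuresHalf x y) : SecuresHalf y x :=
  fun D hD => max_comm (deviatedProfit x D) _ ▸ h D hD

lemma SecuresHalf.disjoint {x y : Finset α} (h : SecuresHalf x y) : Disjoint x y := by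
  rw [disjoint_left]
  intro j hjx hjy
  have hpos : (0 : ℝ) < card α := by exact_mod_cast card_pos_iff.mpr ⟨j⟩
  rcases le_max_iff.mp (h {j} (card_singleton j).le) with hx | hy
  · linarith [deviatedProfit_singleton_nonpos hjx]
  · linarith [deviatedProfit_singleton_nonpos hjy]

lemma SecuresHalf.half_le_card {x y : Finset α} (h : SecuresHalf x y) :
    (card α : ℝ) / 2 ≤ #x := by
  rcases y.eq_empty_or_nonempty with rfl | ⟨j, hj⟩
  · simpa [deviatedProfit] using h ∅ (by simp)
  · have hpos : (0 : ℝ) < card α := by exact_mod_cast card_pos_iff.mpr ⟨j⟩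
    rcases le_max_iff.mp (h {j} (card_singleton j).le) with hx | hy
    · linarith [deviatedProfit_le_card x {j}]
    · linarith [deviatedProfit_singleton_nonpos hj]

theorem securesHalf_iff {x y : Finset α} : SecuresHalf x y ↔ y = xᶜ ∧ 2 * #x = card α := by
  constructor
  · intro h
    have hdisj := h.disjoint
    have hx : card α ≤ 2 * #x := by
      exact_mod_cast (by linarith [h.half_le_card] : (card α : ℝ) ≤ 2 * #x)
    have hy : card α ≤ 2 * #y := by
      exact_mod_cast (by linarith [h.symm.half_le_card] : (card α : ℝ) ≤ 2 * #y)
    have hxy : #x + #y ≤ card α := (card_union_of_disjoint hdisj).symm.trans_le (card_le_univ _)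
    refine ⟨eq_of_subset_of_card_le (subset_compl_iff_disjoint_left.mpr hdisj) ?_, by omega⟩
    rw [card_compl]
    omega
  · rintro ⟨rfl, hcard⟩ D hD
    have hcardR : (2 * #x : ℝ) = card α := by exact_mod_cast hcard
    have hcompl : (#xᶜ : ℝ) = card α / 2 := by
      rw [card_compl, Nat.cast_sub (card_le_univ x)]
      linarith
    by_cases hxD : Disjoint x D
    · rw [deviatedProfit_of_disjoint hxD]
      linarith [le_max_left (#x : ℝ) (deviatedProfit xᶜ D)]
    · obtain ⟨j, hjx, hjD⟩ := not_disjoint_iff.mp hxD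
      have hxcD : Disjoint xᶜ D := disjoint_right.mpr fun k hk =>
        notMem_compl.mpr (card_le_one.mp hD k hk j hjD ▸ hjx)
      rw [deviatedProfit_of_disjoint hxcD, hcompl]
      exact le_max_right _ _

end RobustKnapsack

open RobustKnapsack in
/-- correctness of the reduction from the equipartition problem to
the robust max-min-max knapsack problem with weights `a`, capacity
`C = (∑ a)/2`, nominal profits `1`, deviations `-n`, budget `Γ = 1` and `K = 2`. -/
theorem equipartition_knapsack_reduction (n : ℕ) (hneven : Even n)
    (a : Fin n → ℕ) (C : ℝ) (hC : C = (∑ i, (a i : ℝ)) / 2) :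
    (n : ℝ) / 2 ≤
      (((Finset.univ.filter fun x : Finset (Fin n) => (∑ i ∈ x, (a i : ℝ)) ≤ C) ×ˢ
          (Finset.univ.filter fun x : Finset (Fin n) => (∑ i ∈ x, (a i : ℝ)) ≤ C)).sup'
        (Finset.Nonempty.product
          ⟨∅, Finset.mem_filter.mpr ⟨Finset.mem_univ _, by rw [hC]; simp; positivity⟩⟩
          ⟨∅, Finset.mem_filter.mpr ⟨Finset.mem_univ _, by rw [hC]; simp; positivity⟩⟩)
        fun p => (Finset.univ.powerset.filter fun D : Finset (Fin n) => D.card ≤ 1).inf'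
          ⟨∅, by simp⟩
          fun D => max
            (∑ i ∈ p.1, ((1 : ℝ) - n * (if i ∈ D then 1 else 0)))
            (∑ i ∈ p.2, ((1 : ℝ) - n * (if i ∈ D then 1 else 0)))) ↔
    ∃ I : Finset (Fin n), I.card = n / 2 ∧ ∑ i ∈ I, a i = ∑ i ∈ Iᶜ, a i := by
  subst hC
  have hsecures (x y : Finset (Fin n)) :
      (∀ D ∈ univ.powerset.filter fun D : Finset (Fin n) => #D ≤ 1, (n : ℝ) / 2 ≤ max
        (∑ i ∈ x, ((1 : ℝ) - n * (if i ∈ D then 1 else 0)))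
        (∑ i ∈ y, ((1 : ℝ) - n * (if i ∈ D then 1 else 0)))) ↔ y = xᶜ ∧ 2 * #x = n := by
    simp only [mem_filter, mem_powerset, subset_univ, true_and, sum_one_sub_mul_ite_mem]
    simpa only [SecuresHalf, deviatedProfit, Fintype.card_fin] using
      securesHalf_iff (x := x) (y := y)
  rw [le_sup'_iff]
  constructor
  · rintro ⟨⟨x, y⟩, hfeasible, hval⟩
    obtain ⟨rfl, hcard⟩ := (hsecures x y).mp ((le_inf'_iff _ _).mp hval)
    simp only [mem_product, mem_filter, mem_univ, true_and] at hfeasible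
    exact ⟨x, by omega, by exact_mod_cast (sum_le_half_and_sum_compl_le_half_iff _ x).mp hfeasible⟩
  · rintro ⟨I, hcard, hsum⟩
    refine ⟨(I, Iᶜ), ?_, (le_inf'_iff _ _).mpr ((hsecures I Iᶜ).mpr ⟨rfl, ?_⟩)⟩
    · simpa only [mem_product, mem_filter, mem_univ, true_and] using
        (sum_le_half_and_sum_compl_le_half_iff _ I).mpr (by exact_mod_cast hsum)
    · obtain ⟨m, rfl⟩ := hneven
      omega
end

section
/- Let n ≥ 1, ĉ ∈ ℝ^n, and d ∈ ℝ^n with d_i ≥ 0 for all i, and let x^1, x^2 ∈ {0,1}^n. Let S^{(1)} = {i : x^1_i = 1}, S^{(2)} = {i : x^2_i = 1}, and define d^{(1)} = max_{i∈S^{(1)}} d_i, d^{(2)} = max_{i∈S^{(2)}} d_i, d^{(1,2)} = max_{i∈S^{(1)}∩S^{(2)}} d_i, each taken to be 0 when the corresponding set is empty. Then max over c ∈ U^1(ĉ,d) of min(c^⊤x^1, c^⊤x^2) = max{ min(ĉ^⊤x^1 + d^{(1)}, ĉ^⊤x^2), min(ĉ^⊤x^1 + d^{(1,2)}, ĉ^⊤x^2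 + d^{(1,2)}), min(ĉ^⊤x^1, ĉ^⊤x^2 + d^{(2)}) }. -/
open Finset

/-- `dmax d S = max_{i ∈ S} d i`, taken to be `0` when `S` is empty. -/
noncomputable def dmax {n : ℕ} (d : Fin n → ℝ) (S : Finset (Fin n)) : ℝ :=
  if h : S.Nonempty then S.sup' h d else 0

/-- closed-form evaluation of the worst-case cost of a pair of
binary solutions under the discrete budgeted uncertainty set with `Γ = 1`,
where `S¹, S²` are the supports of `x¹, x²` and `d⁽¹⁾ = dmax d S¹`, etc. -/
theorem cost_formula_gamma_one (n : ℕ) (hn : 1 ≤ n)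
    (chat d : Fin n → ℝ) (hd : ∀ i, 0 ≤ d i)
    (x1 x2 : Fin n → ℝ)
    (hx1 : ∀ i, x1 i = 0 ∨ x1 i = 1) (hx2 : ∀ i, x2 i = 0 ∨ x2 i = 1)
    (S1 S2 : Finset (Fin n))
    (hS1 : S1 = Finset.univ.filter fun i => x1 i = 1)
    (hS2 : S2 = Finset.univ.filter fun i => x2 i = 1) :
    ((budgetU n chat d 1).sup' (budgetU_nonempty _ _ _ _)
        fun c => min (∑ i, c i * x1 i) (∑ i, c i * x2 i)) =
      max (max
        (min ((∑ i, chat i * x1 i) + dmax d S1) (∑ i, chat i * x2 i))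
        (min ((∑ i, chat i * x1 i) + dmax d (S1 ∩ S2))
             ((∑ i, chat i * x2 i) + dmax d (S1 ∩ S2))))
        (min (∑ i, chat i * x1 i) ((∑ i, chat i * x2 i) + dmax d S2)) := by
  set A1 := ∑ i, chat i * x1 i with hA1
  set A2 := ∑ i, chat i * x2 i with hA2
  have key : ∀ (D : Finset (Fin n)) (x : Fin n → ℝ),
      (∑ i, (chat i + (if i ∈ D then d i else 0)) * x i)
        = (∑ i, chat i * x i) + ∑ i ∈ D, d i * x i := by
    intro D x
    simp [add_mul, Finset.sum_add_distrib, ite_mul, Finset.sum_ite_mem]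
  have hm1 : ∀ j, x1 j = if j ∈ S1 then 1 else 0 := by
    intro j; subst hS1; rcases hx1 j with h | h <;> simp [h]
  have hm2 : ∀ j, x2 j = if j ∈ S2 then 1 else 0 := by
    intro j; subst hS2; rcases hx2 j with h | h <;> simp [h]
  have dmax_nonneg : ∀ S : Finset (Fin n), 0 ≤ dmax d S := by
    intro S
    unfold dmax
    split
    · rename_i h
      obtain ⟨j, hj⟩ := h
      exact le_trans (hd j) (Finset.le_sup' d hj)
    · exact le_refl 0
  have le_dmax : ∀ (S : Finset (Fin n)) (j : Fin n), j ∈ S → d j ≤ dmax d S := by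
    intro S j hj
    unfold dmax
    rw [dif_pos ⟨j, hj⟩]
    exact Finset.le_sup' d hj
  have dmax_mem : ∀ S : Finset (Fin n), S.Nonempty → ∃ j ∈ S, dmax d S = d j := by
    intro S h
    obtain ⟨j, hj, hje⟩ := Finset.exists_mem_eq_sup' h d
    exact ⟨j, hj, by unfold dmax; rw [dif_pos h]; exact hje⟩
  have memU : ∀ D : Finset (Fin n), D.card ≤ 1 →
      (fun i => chat i + (if i ∈ D then d i else 0)) ∈ budgetU n chat d 1 := by
    intro D h
    exact Finset.mem_image.mpr ⟨D, by simp [Finset.mem_filter, h], rfl⟩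
  have val1 : ∀ j : Fin n,
      (∑ i, (chat i + (if i ∈ ({j} : Finset (Fin n)) then d i else 0)) * x1 i)
        = A1 + (if j ∈ S1 then d j else 0) := by
    intro j
    rw [key, Finset.sum_singleton, hm1 j]
    by_cases h : j ∈ S1 <;> simp [h, hA1]
  have val2 : ∀ j : Fin n,
      (∑ i, (chat i + (if i ∈ ({j} : Finset (Fin n)) then d i else 0)) * x2 i)
        = A2 + (if j ∈ S2 then d j else 0) := by
    intro j
    rw [key, Finset.sum_singleton, hm2 j]
    by_cases h : j ∈ S2 <;> simp [h, hA2]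
  apply le_antisymm
  · apply Finset.sup'_le
    intro c hc
    obtain ⟨D, hD, rfl⟩ := Finset.mem_image.mp hc
    simp only [Finset.mem_filter, Finset.mem_powerset] at hD
    rcases D.eq_empty_or_nonempty with rfl | hne
    · have e1 := key ∅ x1
      have e2 := key ∅ x2
      simp only [Finset.sum_empty, add_zero] at e1 e2
      simp only [e1, e2, ← hA1, ← hA2]
      exact le_max_of_le_right (min_le_min le_rfl
        (le_add_of_nonneg_right (dmax_nonneg S2)))
    · have hcard : D.card = 1 := le_antisymm hD.2 (Finset.one_le_card.mpr hne)
      obtain ⟨j, rfl⟩ := Finset.card_eq_one.mp hcard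
      simp only [val1, val2]
      by_cases h1 : j ∈ S1 <;> by_cases h2 : j ∈ S2 <;> simp only [h1, h2, if_pos, if_neg,
        if_true, if_false, add_zero]
      · refine le_max_of_le_left (le_max_of_le_right (min_le_min ?_ ?_)) <;>
          exact add_le_add_right (le_dmax _ j (Finset.mem_inter.mpr ⟨h1, h2⟩)) _
      · exact le_max_of_le_left <| le_max_of_le_left <|
          min_le_min (add_le_add_right (le_dmax _ j h1) _) le_rfl
      · exact le_max_of_le_right <|
          min_le_min le_rfl (add_le_add_right (le_dmax _ j h2) _)
      · exact le_max_of_le_right (min_le_min le_rfl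
          (le_add_of_nonneg_right (dmax_nonneg S2)))
  · apply max_le
    · apply max_le
      · -- term 1
        by_cases h : S1.Nonempty
        · obtain ⟨j, hj, hje⟩ := dmax_mem S1 h
          refine le_trans ?_ (Finset.le_sup' _ (memU {j} (by simp)))
          simp only [val1, val2, if_pos hj, hje]
          refine min_le_min le_rfl (le_add_of_nonneg_right ?_)
          split <;> [exact hd j; exact le_rfl]
        · have : dmax d S1 = 0 := by unfold dmax; rw [dif_neg h]
          refine le_trans ?_ (Finset.le_sup' _ (memU ∅ (by simp)))
          have e1 := key ∅ x1
          have e2 := key ∅ x2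
          simp only [Finset.sum_empty, add_zero] at e1 e2
          simp only [e1, e2, ← hA1, ← hA2, this, add_zero, le_refl]
      · -- middle term
        by_cases h : (S1 ∩ S2).Nonempty
        · obtain ⟨j, hj, hje⟩ := dmax_mem (S1 ∩ S2) h
          obtain ⟨hj1, hj2⟩ := Finset.mem_inter.mp hj
          refine le_trans ?_ (Finset.le_sup' _ (memU {j} (by simp)))
          simp only [val1, val2, if_pos hj1, if_pos hj2, hje, le_refl]
        · have : dmax d (S1 ∩ S2) = 0 := by unfold dmax; rw [dif_neg h]
          refine le_trans ?_ (Finset.le_sup' _ (memU ∅ (by simp)))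
          have e1 := key ∅ x1
          have e2 := key ∅ x2
          simp only [Finset.sum_empty, add_zero] at e1 e2
          simp only [e1, e2, ← hA1, ← hA2, this, add_zero, le_refl]
    · -- term 3
      by_cases h : S2.Nonempty
      · obtain ⟨j, hj, hje⟩ := dmax_mem S2 h
        refine le_trans ?_ (Finset.le_sup' _ (memU {j} (by simp)))
        simp only [val1, val2, if_pos hj, hje]
        refine min_le_min (le_add_of_nonneg_right ?_) le_rfl
        split <;> [exact hd j; exact le_rfl]
      · have : dmax d S2 = 0 := by unfold dmax; rw [dif_neg h]
        refine le_trans ?_ (Finset.le_sup' _ (memU ∅ (by simp)))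
        have e1 := key ∅ x1
        have e2 := key ∅ x2
        simp only [Finset.sum_empty, add_zero] at e1 e2
        simp only [e1, e2, ← hA1, ← hA2, this, add_zero, le_refl]
end

section
/- Let n, K, Γ be integers with 1 ≤ K ≤ n and Γ ≥ 1, let t = ⌊n/K⌋, let k be an integer with 1 ≤ k ≤ K−1, let ĉ ∈ ℝ^n, let d ∈ ℝ^n with d_i ≥ 0 for all i, and let X ⊆ {0,1}^n be nonempty and finite. Define U_k = { c ∈ ℝ^n : c_i = ĉ_i + δ_i d_i for some δ ∈ {0,1}^n with δ_i = 0 for all i ≤ (k−1)t, Σ_{i=(k−1)t+1}^{kt} δ_i ≥ 1, and Σ_{i=(k−1)t+1}^{n} δ_i ≤ Γ }. Write (y)_+ = max(y,0). Let A = { d_i : (k−1)t+1 ≤ i ≤ n } ∪ {0} and let P = (A × {0}) ∪ { (α,α) : α ∈ A } ∪ { (α, (α − d_i)_+) : α ∈ A, (k−1)t+1 ≤ i ≤ kt }. For (α,β) ∈ ℝ², define w(α,β) ∈ ℝ^n by w_i = 0 for i ≤ (k−1)t, w_i = (d_i + β − α)_+ − (β − α)_+ for (k−1)t+1 ≤ i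 ≤ kt, and w_i = (d_i − α)_+ for i ≥ kt+1. Then min over x ∈ X of max over c ∈ U_k of c^⊤x = min over (α*,β*) ∈ P of [ α*·Γ − β* + t·(β* − α*)_+ + min over x ∈ X of (ĉ^⊤x + w(α*,β*)^⊤x) ]. -/
open Finset

/-- The part `U_k` of the partition of the discrete budgeted uncertainty set used
by the first heuristic: scenarios `c i = ĉ i + δ i * d i` whose deviation pattern
`δ` (identified with the set `D` of its nonzero coordinates) vanishes on the first
`(k-1)t` coordinates, has at least one deviation in the block
`{(k-1)t+1,…,kt}` and at most `Γ` deviations among coordinates `> (k-1)t`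
(indices are `1`-based in the paper, `0`-based here). -/
noncomputable def heurU (n Γ t k : ℕ) (chat d : Fin n → ℝ) : Finset (Fin n → ℝ) :=
  (((Finset.univ : Finset (Fin n)).powerset.filter fun D =>
      (∀ i ∈ D, (k - 1) * t ≤ i.val) ∧
      (∃ i ∈ D, (k - 1) * t ≤ i.val ∧ i.val < k * t) ∧
      (D.filter fun i => (k - 1) * t ≤ i.val).card ≤ Γ).image
    fun D i => chat i + (if i ∈ D then d i else 0))

lemma heurU_nonempty (n K Γ t k : ℕ) (hK1 : 1 ≤ K) (hKn : K ≤ n) (hΓ : 1 ≤ Γ)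
    (ht : t = n / K) (hk1 : 1 ≤ k) (hkK : k ≤ K - 1) (chat d : Fin n → ℝ) :
    (heurU n Γ t k chat d).Nonempty := by
  have ht1 : 1 ≤ t := by
    rw [ht]
    exact (Nat.one_le_div_iff (by omega)).mpr hKn
  have hKt : K * t ≤ n := by
    rw [ht, mul_comm]
    exact Nat.div_mul_le_self n K
  have hkt : k * t ≤ (K - 1) * t := Nat.mul_le_mul_right t hkK
  have hsub : (K - 1) * t + t = K * t := by
    have hK' : K - 1 + 1 = K := by omega
    rw [← hK', add_mul, one_mul, hK']
  have hlow : (k - 1) * t + t = k * t := by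
    have hk' : k - 1 + 1 = k := by omega
    rw [← hk', add_mul, one_mul, hk']
  have hj : k * t - 1 < n := by omega
  refine ⟨_, Finset.mem_image.mpr ⟨{⟨k * t - 1, hj⟩}, ?_, rfl⟩⟩
  simp only [Finset.mem_filter, Finset.mem_powerset, Finset.subset_univ, true_and,
    Finset.mem_singleton]
  refine ⟨by simp; omega, ⟨⟨k * t - 1, hj⟩, by simp, by simp; omega, by simp; omega⟩, ?_⟩
  exact (Finset.card_filter_le _ _).trans (by simp [hΓ])

/-- The finite set `A = { d i : (k-1)t+1 ≤ i ≤ n } ∪ {0}` of candidate dual values. -/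
noncomputable def heurA (n t k : ℕ) (d : Fin n → ℝ) : Finset ℝ :=
  insert (0 : ℝ) ((Finset.univ.filter fun i : Fin n => (k - 1) * t ≤ i.val).image d)

/-- The finite set `P` of candidate dual pairs
`(A × {0}) ∪ { (α,α) : α ∈ A } ∪ { (α, (α - d i)₊) : α ∈ A, i in the k-th block }`. -/
noncomputable def heurP (n t k : ℕ) (d : Fin n → ℝ) : Finset (ℝ × ℝ) :=
  (heurA n t k d ×ˢ {(0 : ℝ)}) ∪ (heurA n t k d).image (fun α => (α, α)) ∪
    ((heurA n t k d ×ˢ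
        (Finset.univ.filter fun i : Fin n => (k - 1) * t ≤ i.val ∧ i.val < k * t)).image
      fun q => (q.1, max (q.1 - d q.2) 0))

lemma heurP_nonempty (n t k : ℕ) (d : Fin n → ℝ) : (heurP n t k d).Nonempty := by
  refine ⟨((0 : ℝ), (0 : ℝ)), ?_⟩
  unfold heurP heurA
  simp

/-- The modified cost vector `w(α,β)` of the deterministic problem associated with
the dual pair `(α,β)`. -/
noncomputable def heurW (n t k : ℕ) (d : Fin n → ℝ) (α β : ℝ) : Fin n → ℝ :=
  fun i =>
    if i.val < (k - 1) * t then 0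
    else if i.val < k * t then max (d i + β - α) 0 - max (β - α) 0
    else max (d i - α) 0

-- helper: pull additive constant out of inf'
lemma add_inf'_helper {β : Type*} (a : ℝ) (s : Finset β) (hs : s.Nonempty) (f : β → ℝ) :
    (s.inf' hs fun b => a + f b) = a + s.inf' hs f := by
  apply le_antisymm
  · obtain ⟨b, hb, hbe⟩ := Finset.exists_mem_eq_inf' hs f
    rw [hbe]
    exact Finset.inf'_le _ hb
  · apply Finset.le_inf'
    intro b hb
    exact add_le_add le_rfl (Finset.inf'_le f hb)

lemma real1 (c α : ℝ) : max (c + max (α - c) 0 - α) 0 = max (α - c) 0 + c - α := by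
  rcases le_total α c with h | h
  · rw [max_eq_right (by linarith : α - c ≤ (0:ℝ))]
    rw [max_eq_left (by linarith : (0:ℝ) ≤ c + 0 - α)]
    ring
  · rw [max_eq_left (by linarith : (0:ℝ) ≤ α - c)]
    rw [show c + (α - c) - α = (0:ℝ) by ring, max_self]
    ring

lemma real2 (c cj α : ℝ) (hc : c ≤ cj) :
    max (c + max (α - cj) 0 - α) 0 ≤ max (c - α) 0 := by
  rcases le_total α cj with h | h
  · rw [max_eq_right (by linarith : α - cj ≤ (0:ℝ)), show c + 0 - α = c - α by ring]
  · rw [max_eq_left (by linarith : (0:ℝ) ≤ α - cj)]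
    exact max_le (le_trans (by linarith) (le_max_right (c - α) 0)) (le_max_right _ _)

lemma card_block (n a b : ℕ) (hb : b ≤ n) :
    (Finset.univ.filter fun i : Fin n => a ≤ i.val ∧ i.val < b).card = b - a := by
  have h : (Finset.univ.filter fun i : Fin n => a ≤ i.val ∧ i.val < b)
      = (Finset.Ico a b).attachFin
        (fun m hm => lt_of_lt_of_le (Finset.mem_Ico.mp hm).2 hb) := by
    ext i
    simp [Finset.mem_attachFin, Finset.mem_Ico]
  rw [h, Finset.card_attachFin, Nat.card_Ico]

lemma exists_top_subset {n : ℕ} (d : Fin n → ℝ) :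
    ∀ (m : ℕ) (R : Finset (Fin n)), ∃ D, D ⊆ R ∧ D.card = min m R.card ∧
      ∀ i ∈ D, ∀ j ∈ R \ D, d j ≤ d i := by
  intro m
  induction m with
  | zero => intro R; exact ⟨∅, empty_subset _, by simp, by simp⟩
  | succ m ih =>
    intro R
    rcases R.eq_empty_or_nonempty with rfl | hne
    · exact ⟨∅, empty_subset _, by simp, by simp⟩
    obtain ⟨i0, hi0, hmax⟩ := R.exists_max_image d hne
    obtain ⟨D, hsub, hcard, hdom⟩ := ih (R.erase i0)
    have hi0D : i0 ∉ D := fun h => (Finset.mem_erase.mp (hsub h)).1 rfl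
    refine ⟨insert i0 D, ?_, ?_, ?_⟩
    · exact Finset.insert_subset hi0 (hsub.trans (Finset.erase_subset _ _))
    · rw [Finset.card_insert_of_notMem hi0D, hcard, Finset.card_erase_of_mem hi0]
      have := Finset.card_pos.mpr hne
      omega
    · intro i hi j hj
      obtain ⟨hjR, hjni⟩ := Finset.mem_sdiff.mp hj
      have hji0 : j ≠ i0 := fun h => hjni (h ▸ Finset.mem_insert_self _ _)
      rcases Finset.mem_insert.mp hi with rfl | hiD
      · exact hmax j hjR
      · exact hdom i hiD j (Finset.mem_sdiff.mpr
          ⟨Finset.mem_erase.mpr ⟨hji0, hjR⟩, fun h => hjni (Finset.mem_insert_of_mem h)⟩)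

lemma top_dual {n : ℕ} (d : Fin n → ℝ) (hd : ∀ i, 0 ≤ d i) (m : ℕ) (R : Finset (Fin n)) :
    ∃ (α : ℝ) (D : Finset (Fin n)), D ⊆ R ∧ D.card ≤ m ∧ 0 ≤ α ∧
      (α = 0 ∨ ∃ i ∈ R, α = d i) ∧
      α * m + ∑ i ∈ R, max (d i - α) 0 ≤ ∑ i ∈ D, d i := by
  obtain ⟨D, hsub, hcard, hdom⟩ := exists_top_subset d m R
  by_cases hRD : R \ D = ∅
  · have hDR : D = R :=
      Finset.Subset.antisymm hsub (Finset.sdiff_eq_empty_iff_subset.mp hRD)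
    refine ⟨0, D, hsub, by omega, le_refl _, Or.inl rfl, ?_⟩
    subst hDR
    simp only [zero_mul, sub_zero, zero_add]
    apply le_of_eq
    exact Finset.sum_congr rfl fun i _ => max_eq_left (hd i)
  · obtain ⟨j0, hj0, hjmax⟩ :=
      Finset.exists_max_image (R \ D) d (Finset.nonempty_of_ne_empty hRD)
    obtain ⟨hj0R, hj0D⟩ := Finset.mem_sdiff.mp hj0
    have hlt : D.card < R.card :=
      Finset.card_lt_card (Finset.ssubset_iff_of_subset hsub |>.mpr ⟨j0, hj0R, hj0D⟩)
    have hDm : D.card = m := by omega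
    refine ⟨d j0, D, hsub, by omega, hd j0, Or.inr ⟨j0, hj0R, rfl⟩, ?_⟩
    have hsplit : ∑ i ∈ R \ D, max (d i - d j0) 0 + ∑ i ∈ D, max (d i - d j0) 0
        = ∑ i ∈ R, max (d i - d j0) 0 := Finset.sum_sdiff hsub
    have h1 : ∑ i ∈ R \ D, max (d i - d j0) 0 = 0 :=
      Finset.sum_eq_zero fun i hi => max_eq_right (by linarith [hjmax i hi])
    have h2 : ∑ i ∈ D, max (d i - d j0) 0 = ∑ i ∈ D, d i - D.card * d j0 := by
      rw [Finset.sum_congr rfl fun i hi =>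
        max_eq_left (by linarith [hdom i hi j0 hj0])]
      rw [Finset.sum_sub_distrib, Finset.sum_const, nsmul_eq_mul]
    rw [← hsplit, h1, h2, hDm]
    ring_nf
    exact le_refl _

lemma lemA (n Γ t k : ℕ) (hkt : k * t ≤ n) (hlow : (k - 1) * t + t = k * t)
    (d : Fin n → ℝ) (x : Finset (Fin n)) (α β : ℝ) (hα : 0 ≤ α) :
    ∑ i ∈ Finset.univ.filter (fun i : Fin n => (k - 1) * t ≤ i.val),
        max ((if i ∈ x then d i else 0) + (if i.val < k * t then β else 0) - α) 0
      = t * max (β - α) 0 + ∑ i ∈ x, heurW n t k d α β i := by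
  have hcard : (Finset.univ.filter fun i : Fin n =>
      (k - 1) * t ≤ i.val ∧ i.val < k * t).card = t := by
    rw [card_block n _ _ hkt]; omega
  have hx : ∑ i ∈ x, heurW n t k d α β i
      = ∑ i : Fin n, (if i ∈ x then heurW n t k d α β i else 0) := by
    rw [Finset.sum_ite_mem, Finset.univ_inter]
  have hb : t * max (β - α) 0 = ∑ i : Fin n,
      (if (k - 1) * t ≤ i.val ∧ i.val < k * t then max (β - α) 0 else 0) := by
    rw [← Finset.sum_filter, Finset.sum_const, hcard, nsmul_eq_mul]
  rw [hx, hb, Finset.sum_filter, ← Finset.sum_add_distrib]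
  apply Finset.sum_congr rfl
  intro i _
  by_cases h1 : i.val < (k - 1) * t
  · have h2 : ¬ (k - 1) * t ≤ i.val := by omega
    have h3 : ¬((k - 1) * t ≤ i.val ∧ i.val < k * t) := fun h => h2 h.1
    rw [if_neg h2, if_neg h3]
    have e1 : heurW n t k d α β i = 0 := by simp [heurW, h1]
    simp [e1]
  · have h1' : (k - 1) * t ≤ i.val := by omega
    by_cases h2 : i.val < k * t
    · have e1 : heurW n t k d α β i = max (d i + β - α) 0 - max (β - α) 0 := by
        simp [heurW, h1, h2]
      rw [if_pos h1', if_pos (⟨h1', h2⟩ : (k - 1) * t ≤ i.val ∧ i.val < k * t),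
        if_pos h2]
      by_cases hix : i ∈ x
      · rw [if_pos hix, if_pos hix, e1]; ring
      · rw [if_neg hix, if_neg hix, zero_add, add_zero]
    · have h3 : ¬((k - 1) * t ≤ i.val ∧ i.val < k * t) := fun h => h2 h.2
      have e1 : heurW n t k d α β i = max (d i - α) 0 := by
        simp [heurW, h1, h2]
      rw [if_pos h1', if_neg h3, if_neg h2, zero_add]
      by_cases hix : i ∈ x
      · rw [if_pos hix, if_pos hix, add_zero, e1]
      · rw [if_neg hix, if_neg hix, add_zero, zero_sub,
          max_eq_right (by linarith : -α ≤ (0:ℝ))]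

lemma heurA_nonneg {n t k : ℕ} {d : Fin n → ℝ} (hd : ∀ i, 0 ≤ d i) :
    ∀ a ∈ heurA n t k d, (0:ℝ) ≤ a := by
  intro a ha
  simp only [heurA, Finset.mem_insert, Finset.mem_image, Finset.mem_filter] at ha
  rcases ha with rfl | ⟨i, _, rfl⟩
  · exact le_refl 0
  · exact hd i

lemma heurP_nonneg {n t k : ℕ} {d : Fin n → ℝ} (hd : ∀ i, 0 ≤ d i) :
    ∀ q ∈ heurP n t k d, (0:ℝ) ≤ q.1 ∧ (0:ℝ) ≤ q.2 := by
  intro q hq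
  simp only [heurP, Finset.mem_union, Finset.mem_image, Finset.mem_product,
    Finset.mem_singleton] at hq
  rcases hq with (⟨h1, h2⟩ | ⟨a, ha, rfl⟩) | ⟨p, hp, rfl⟩
  · exact ⟨heurA_nonneg hd _ h1, h2.ge⟩
  · exact ⟨heurA_nonneg hd a ha, heurA_nonneg hd a ha⟩
  · exact ⟨heurA_nonneg hd _ hp.1, le_max_right _ _⟩

set_option maxHeartbeats 1000000 in
lemma keyx (n K Γ t k : ℕ) (hK1 : 1 ≤ K) (hKn : K ≤ n) (hΓ : 1 ≤ Γ)
    (ht : t = n / K) (hk1 : 1 ≤ k) (hkK : k ≤ K - 1)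
    (chat d : Fin n → ℝ) (hd : ∀ i, 0 ≤ d i) (x : Finset (Fin n)) :
    (heurU n Γ t k chat d).sup'
        (heurU_nonempty n K Γ t k hK1 hKn hΓ ht hk1 hkK chat d)
        (fun c => ∑ i ∈ x, c i)
      = (heurP n t k d).inf' (heurP_nonempty n t k d)
          (fun q => q.1 * Γ - q.2 + t * max (q.2 - q.1) 0 +
            ∑ i ∈ x, (chat i + heurW n t k d q.1 q.2 i)) := by
  have ht1 : 1 ≤ t := by
    rw [ht]; exact (Nat.one_le_div_iff (by omega)).mpr hKn
  have hKt : K * t ≤ n := by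
    rw [ht, mul_comm]; exact Nat.div_mul_le_self n K
  have hkKt : k * t ≤ (K - 1) * t := Nat.mul_le_mul_right t hkK
  have hsub : (K - 1) * t + t = K * t := by
    have hK' : K - 1 + 1 = K := by omega
    rw [← hK', add_mul, one_mul, hK']
  have hlow : (k - 1) * t + t = k * t := by
    have hk' : k - 1 + 1 = k := by omega
    rw [← hk', add_mul, one_mul, hk']
  have hktn : k * t + t ≤ n := by omega
  have hkt : k * t ≤ n := by omega
  apply le_antisymm
  · apply Finset.sup'_le
    intro c hc
    simp only [heurU, Finset.mem_image, Finset.mem_filter, Finset.mem_powerset] at hc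
    obtain ⟨D, ⟨-, hD1, hD2, hD3⟩, rfl⟩ := hc
    apply Finset.le_inf'
    intro q hq
    obtain ⟨hq1, hq2⟩ := heurP_nonneg hd q hq
    have key : ∑ i ∈ x, (if i ∈ D then d i else 0)
        ≤ q.1 * Γ - q.2 + (t * max (q.2 - q.1) 0
            + ∑ i ∈ x, heurW n t k d q.1 q.2 i) := by
      rw [← lemA n Γ t k hkt hlow d x q.1 q.2 hq1]
      have hDT : D ⊆ Finset.univ.filter (fun i : Fin n => (k - 1) * t ≤ i.val) :=
        fun i hi => Finset.mem_filter.mpr ⟨Finset.mem_univ i, hD1 i hi⟩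
      have hDcard : D.card ≤ Γ := by
        rwa [Finset.filter_true_of_mem hD1] at hD3
      have s1 : ∑ i ∈ x, (if i ∈ D then d i else 0)
          = ∑ i ∈ D, (if i ∈ x then d i else 0) := by
        rw [Finset.sum_ite_mem, Finset.inter_comm, ← Finset.sum_ite_mem]
      rw [s1]
      calc ∑ i ∈ D, (if i ∈ x then d i else 0)
          ≤ ∑ i ∈ D, (q.1 - (if i.val < k * t then q.2 else 0)
              + max ((if i ∈ x then d i else 0)
                  + (if i.val < k * t then q.2 else 0) - q.1) 0) := by
            apply Finset.sum_le_sum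
            intro i _
            have h := le_max_left ((if i ∈ x then d i else 0)
                + (if i.val < k * t then q.2 else 0) - q.1) 0
            linarith
        _ = q.1 * D.card - (∑ i ∈ D, if i.val < k * t then q.2 else 0)
              + ∑ i ∈ D, max ((if i ∈ x then d i else 0)
                  + (if i.val < k * t then q.2 else 0) - q.1) 0 := by
            rw [Finset.sum_add_distrib, Finset.sum_sub_distrib, Finset.sum_const,
              nsmul_eq_mul]
            ring
        _ ≤ q.1 * Γ - q.2 + ∑ i ∈ Finset.univ.filter
              (fun i : Fin n => (k - 1) * t ≤ i.val),
              max ((if i ∈ x then d i else 0)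
                  + (if i.val < k * t then q.2 else 0) - q.1) 0 := by
            have b1 : q.1 * (D.card : ℝ) ≤ q.1 * Γ := by
              apply mul_le_mul_of_nonneg_left _ hq1
              exact_mod_cast hDcard
            have b2 : q.2 ≤ ∑ i ∈ D, (if i.val < k * t then q.2 else 0) := by
              obtain ⟨i0, hi0D, _, hi0b⟩ := hD2
              calc q.2 = ∑ i ∈ ({i0} : Finset (Fin n)),
                    (if i.val < k * t then q.2 else 0) := by simp [hi0b]
                _ ≤ _ := by
                    apply Finset.sum_le_sum_of_subset_of_nonneg
                      (Finset.singleton_subset_iff.mpr hi0D)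
                    intro i _ _
                    split
                    · exact hq2
                    · exact le_rfl
            have b3 : ∑ i ∈ D, max ((if i ∈ x then d i else 0)
                  + (if i.val < k * t then q.2 else 0) - q.1) 0
                ≤ ∑ i ∈ Finset.univ.filter
                    (fun i : Fin n => (k - 1) * t ≤ i.val),
                  max ((if i ∈ x then d i else 0)
                      + (if i.val < k * t then q.2 else 0) - q.1) 0 :=
              Finset.sum_le_sum_of_subset_of_nonneg hDT
                (fun i _ _ => le_max_right _ _)
            linarith
    have e1 : ∑ i ∈ x, ((fun i => chat i + if i ∈ D then d i else 0) i)
        = ∑ i ∈ x, chat i + ∑ i ∈ x, (if i ∈ D then d i else 0) := by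
      rw [← Finset.sum_add_distrib]
    have e2 : ∑ i ∈ x, (chat i + heurW n t k d q.1 q.2 i)
        = ∑ i ∈ x, chat i + ∑ i ∈ x, heurW n t k d q.1 q.2 i := by
      rw [← Finset.sum_add_distrib]
    dsimp only
    rw [e1]
    rw [e2]
    linarith
  · -- strong direction
    have hB1j : ((k - 1) * t : ℕ) < n := by omega
    have hB1ne : (Finset.univ.filter fun i : Fin n =>
        (k - 1) * t ≤ i.val ∧ i.val < k * t).Nonempty := by
      refine ⟨⟨(k - 1) * t, hB1j⟩, ?_⟩
      simp only [Finset.mem_filter, Finset.mem_univ, true_and]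
      exact ⟨le_refl _, (by omega : (k - 1) * t < k * t)⟩
    obtain ⟨j, hjB1, hjmax⟩ := Finset.exists_max_image _
      (fun i : Fin n => if i ∈ x then d i else 0) hB1ne
    simp only [Finset.mem_filter, Finset.mem_univ, true_and] at hjB1
    obtain ⟨hj1, hj2⟩ := hjB1
    obtain ⟨α, D', hD'R, hD'card, hα0, hαmem, hdual⟩ :=
      top_dual d hd (Γ - 1) ((x.filter fun i : Fin n => (k - 1) * t ≤ i.val).erase j)
    set β := max (α - (if j ∈ x then d j else 0)) 0 with hβ
    have hβ0 : (0:ℝ) ≤ β := le_max_right _ _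
    have hαA : α ∈ heurA n t k d := by
      rcases hαmem with rfl | ⟨i, hiR, rfl⟩
      · exact Finset.mem_insert_self _ _
      · apply Finset.mem_insert_of_mem
        apply Finset.mem_image_of_mem
        have hi : i ∈ x.filter fun i : Fin n => (k - 1) * t ≤ i.val :=
          Finset.mem_of_mem_erase hiR
        exact Finset.mem_filter.mpr ⟨Finset.mem_univ i, (Finset.mem_filter.mp hi).2⟩
    have hqP : ((α, β) : ℝ × ℝ) ∈ heurP n t k d := by
      by_cases hjx : j ∈ x
      · have hβ' : β = max (α - d j) 0 := by rw [hβ, if_pos hjx]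
        rw [hβ']
        apply Finset.mem_union_right
        refine Finset.mem_image.mpr ⟨(α, j), Finset.mem_product.mpr ⟨hαA, ?_⟩, rfl⟩
        exact Finset.mem_filter.mpr ⟨Finset.mem_univ j, hj1, hj2⟩
      · have hβ' : β = α := by rw [hβ, if_neg hjx, sub_zero, max_eq_left hα0]
        rw [hβ']
        apply Finset.mem_union_left
        apply Finset.mem_union_right
        exact Finset.mem_image_of_mem _ hαA
    have hjD' : j ∉ D' := fun h => (Finset.notMem_erase j _) (hD'R h)
    have hD'x : D' ⊆ x := fun i hi =>
      Finset.mem_of_mem_filter i (Finset.mem_of_mem_erase (hD'R hi))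
    have hD'T : ∀ i ∈ D', (k - 1) * t ≤ i.val := fun i hi =>
      (Finset.mem_filter.mp (Finset.mem_of_mem_erase (hD'R hi))).2
    have hDall : ∀ i ∈ insert j D', (k - 1) * t ≤ i.val := by
      intro i hi
      rcases Finset.mem_insert.mp hi with rfl | h
      · exact hj1
      · exact hD'T i h
    have hcU : (fun i => chat i + if i ∈ insert j D' then d i else 0)
        ∈ heurU n Γ t k chat d := by
      apply Finset.mem_image_of_mem
      refine Finset.mem_filter.mpr ⟨Finset.mem_powerset.mpr (Finset.subset_univ _),
        hDall, ⟨j, Finset.mem_insert_self _ _, hj1, hj2⟩, ?_⟩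
      rw [Finset.filter_true_of_mem hDall, Finset.card_insert_of_notMem hjD']
      omega
    refine le_trans (Finset.inf'_le _ hqP) (le_trans ?_ (Finset.le_sup' _ hcU))
    dsimp only
    have hval : ∑ i ∈ x, (if i ∈ insert j D' then d i else 0)
        = (if j ∈ x then d j else 0) + ∑ i ∈ D', d i := by
      rw [Finset.sum_ite_mem, Finset.inter_comm, ← Finset.sum_ite_mem,
        Finset.sum_insert hjD']
      congr 1
      exact Finset.sum_congr rfl fun i hi => if_pos (hD'x hi)
    have e1 : ∑ i ∈ x, (chat i + if i ∈ insert j D' then d i else 0)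
        = ∑ i ∈ x, chat i + ∑ i ∈ x, (if i ∈ insert j D' then d i else 0) := by
      rw [← Finset.sum_add_distrib]
    have e2 : ∑ i ∈ x, (chat i + heurW n t k d α β i)
        = ∑ i ∈ x, chat i + ∑ i ∈ x, heurW n t k d α β i := by
      rw [← Finset.sum_add_distrib]
    rw [e1, e2, hval]
    have hjT : j ∈ Finset.univ.filter (fun i : Fin n => (k - 1) * t ≤ i.val) :=
      Finset.mem_filter.mpr ⟨Finset.mem_univ j, hj1⟩
    have hRe : (Finset.univ.filter fun i : Fin n =>
        (k - 1) * t ≤ i.val).erase j ∩ x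
        = (x.filter fun i : Fin n => (k - 1) * t ≤ i.val).erase j := by
      ext i
      simp only [Finset.mem_inter, Finset.mem_erase, Finset.mem_filter,
        Finset.mem_univ, true_and]
      tauto
    have hstep : ∑ i ∈ Finset.univ.filter (fun i : Fin n => (k - 1) * t ≤ i.val),
        max ((if i ∈ x then d i else 0) + (if i.val < k * t then β else 0) - α) 0
        ≤ (β + (if j ∈ x then d j else 0) - α)
          + ∑ i ∈ (x.filter fun i : Fin n => (k - 1) * t ≤ i.val).erase j,
              max (d i - α) 0 := by
      rw [← Finset.add_sum_erase _ _ hjT]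
      apply add_le_add
      · show max ((if j ∈ x then d j else 0)
            + (if j.val < k * t then β else 0) - α) 0
            ≤ β + (if j ∈ x then d j else 0) - α
        rw [if_pos hj2, hβ]
        exact le_of_eq (real1 _ _)
      · calc ∑ i ∈ (Finset.univ.filter
              (fun i : Fin n => (k - 1) * t ≤ i.val)).erase j,
            max ((if i ∈ x then d i else 0)
                + (if i.val < k * t then β else 0) - α) 0
            ≤ ∑ i ∈ (Finset.univ.filter
                (fun i : Fin n => (k - 1) * t ≤ i.val)).erase j,
              max ((if i ∈ x then d i else 0) - α) 0 := by
              apply Finset.sum_le_sum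
              intro i hi
              by_cases h2 : i.val < k * t
              · rw [if_pos h2, hβ]
                obtain ⟨hij, hiT⟩ := Finset.mem_erase.mp hi
                have hiT' := (Finset.mem_filter.mp hiT).2
                exact real2 _ _ _ (hjmax i (Finset.mem_filter.mpr
                  ⟨Finset.mem_univ i, hiT', h2⟩))
              · rw [if_neg h2, add_zero]
          _ = ∑ i ∈ (Finset.univ.filter
                (fun i : Fin n => (k - 1) * t ≤ i.val)).erase j,
              (if i ∈ x then max (d i - α) 0 else 0) := by
              apply Finset.sum_congr rfl
              intro i _
              by_cases hix : i ∈ x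
              · rw [if_pos hix, if_pos hix]
              · rw [if_neg hix, if_neg hix, zero_sub,
                  max_eq_right (by linarith : -α ≤ (0:ℝ))]
          _ = ∑ i ∈ (x.filter fun i : Fin n => (k - 1) * t ≤ i.val).erase j,
              max (d i - α) 0 := by
              rw [Finset.sum_ite_mem, hRe]
    have hcast : ((Γ - 1 : ℕ) : ℝ) = (Γ : ℝ) - 1 := by
      rw [Nat.cast_sub hΓ, Nat.cast_one]
    rw [hcast] at hdual
    have hmul : α * ((Γ : ℝ) - 1) = α * (Γ : ℝ) - α := by ring
    have key : α * (Γ : ℝ) - β + ((t : ℝ) * max (β - α) 0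
          + ∑ i ∈ x, heurW n t k d α β i)
        ≤ (if j ∈ x then d j else 0) + ∑ i ∈ D', d i := by
      rw [← lemA n Γ t k hkt hlow d x α β hα0]
      linarith
    linarith

/-- the min-max problem over the part `U_k` of the budgeted
uncertainty partition reduces to finitely many deterministic problems, one for
each candidate dual pair `(α*,β*)` in the finite set `P`. -/
theorem heuristic_one_minmax (n K Γ t k : ℕ) (hK1 : 1 ≤ K) (hKn : K ≤ n)
    (hΓ : 1 ≤ Γ) (ht : t = n / K) (hk1 : 1 ≤ k) (hkK : k ≤ K - 1)
    (chat d : Fin n → ℝ) (hd : ∀ i, 0 ≤ d i)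
    (X : Finset (Finset (Fin n))) (hX : X.Nonempty) :
    (X.inf' hX fun x => (heurU n Γ t k chat d).sup'
        (heurU_nonempty n K Γ t k hK1 hKn hΓ ht hk1 hkK chat d)
        fun c => ∑ i ∈ x, c i) =
      (heurP n t k d).inf' (heurP_nonempty n t k d)
        fun q => q.1 * Γ - q.2 + t * max (q.2 - q.1) 0 +
          X.inf' hX fun x => ∑ i ∈ x, (chat i + heurW n t k d q.1 q.2 i) := by
  calc (X.inf' hX fun x => (heurU n Γ t k chat d).sup'
        (heurU_nonempty n K Γ t k hK1 hKn hΓ ht hk1 hkK chat d)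
        fun c => ∑ i ∈ x, c i)
      = X.inf' hX fun x => (heurP n t k d).inf' (heurP_nonempty n t k d)
          fun q => q.1 * Γ - q.2 + t * max (q.2 - q.1) 0 +
            ∑ i ∈ x, (chat i + heurW n t k d q.1 q.2 i) :=
        Finset.inf'_congr _ rfl
          (fun x _ => keyx n K Γ t k hK1 hKn hΓ ht hk1 hkK chat d hd x)
    _ = (heurP n t k d).inf' (heurP_nonempty n t k d)
          fun q => X.inf' hX fun x =>
            q.1 * Γ - q.2 + t * max (q.2 - q.1) 0 +
              ∑ i ∈ x, (chat i + heurW n t k d q.1 q.2 i) :=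
        Finset.inf'_comm hX (heurP_nonempty n t k d) _
    _ = (heurP n t k d).inf' (heurP_nonempty n t k d)
          fun q => q.1 * Γ - q.2 + t * max (q.2 - q.1) 0 +
            X.inf' hX fun x => ∑ i ∈ x, (chat i + heurW n t k d q.1 q.2 i) :=
        Finset.inf'_congr _ rfl (fun q _ => add_inf'_helper _ X hX _)
end

section
/- Let n ≥ 1 and let m, p be integers with 0 ≤ m < p ≤ n, let d_i ≥ 0 for i = m+1,…,n, let x ∈ {0,1}^n, and let Γ ≥ 1 be a real number. Write (y)_+ = max(y,0) and define g : [0,∞)² → ℝ by g(α,β) = α·Γ − β + Σ_{i=m+1}^{p} [ x_i·(d_i + β − α)_+ + (1 − x_i)·(β − α)_+ ] + Σ_{i=p+1}^{n} x_i·(d_i − α)_+. Let A = { d_i : m+1 ≤ i ≤ n } ∪ {0} and P = (A × {0}) ∪ { (α,α) : α ∈ A } ∪ { (α, (α − d_i)_+) : α ∈ A, m+1 ≤ i ≤ p }. Then g is bounded below on [0,∞)², its infimum over [0,∞)² is attained, and inf_{(α,β)∈[0,∞)²} g(α,β) = min_{(α,β)∈P} g(α,β). -/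
/-!
A function `t ↦ c t + ∑ wᵢ (t - eᵢ)₊` is affine between consecutive kinks `eᵢ`, so if its slope
`c + ∑ wᵢ` on the last piece is nonnegative, on a half-line `[L, ∞)` it is minimised at `L` or at
a kink. Since `x i ∈ {0, 1}`, the summand of `g` for `m ≤ i < p` is the single hinge
`(β - α + x i d i)₊`, and for `p ≤ i` and `α ≥ 0` it is `(x i d i - α)₊`. Moving along the
diagonal leaves the first family unchanged and has final slope `Γ - 1 ≥ 0`; it brings any point
to `α = 0`, to `β = 0`, or to `α = x i d i`. On `β = 0` the final slope is `Γ ≥ 0`, so `α` may be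
moved into `A`. With `α = a` fixed, the final slope in `β` is `#{i | m ≤ i < p} - 1 ≥ 0`, so `β`
may be moved to `0` or to some `(a - x i d i)₊`. The resulting point lies in `P`.
-/

open Finset

/-- The finite set `A = { d i : m+1 ≤ i ≤ n } ∪ {0}` of candidate dual values
(indices are `1`-based in the paper, `0`-based here). -/
noncomputable def kinkA (n m : ℕ) (d : Fin n → ℝ) : Finset ℝ :=
  insert (0 : ℝ) ((Finset.univ.filter fun i : Fin n => m ≤ i.val).image d)

/-- The finite set `P` of kinkpoints
`(A × {0}) ∪ { (α,α) : α ∈ A } ∪ { (α, (α - d i)₊) : α ∈ A, m+1 ≤ i ≤ p }`. -/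
noncomputable def kinkP (n m p : ℕ) (d : Fin n → ℝ) : Finset (ℝ × ℝ) :=
  (kinkA n m d ×ˢ {(0 : ℝ)}) ∪ (kinkA n m d).image (fun α => (α, α)) ∪
    ((kinkA n m d ×ˢ
        (Finset.univ.filter fun i : Fin n => m ≤ i.val ∧ i.val < p)).image
      fun q => (q.1, max (q.1 - d q.2) 0))

lemma kinkP_nonempty (n m p : ℕ) (d : Fin n → ℝ) : (kinkP n m p d).Nonempty := by
  refine ⟨((0 : ℝ), (0 : ℝ)), ?_⟩
  unfold kinkP kinkA
  simp

noncomputable def hingeSum {ι : Type*} (s : Finset ι) (w e : ι → ℝ) (c t : ℝ) : ℝ :=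
  c * t + ∑ i ∈ s, w i * max (t - e i) 0

section Hinge

variable {ι : Type*} {s : Finset ι} {w e : ι → ℝ} {c : ℝ}

lemma hingeSum_sub_hingeSum {a b u v : ℝ} (hab : ∀ i ∈ s, e i ≤ a ∨ b ≤ e i)
    (hu : u ∈ Set.Icc a b) (hv : v ∈ Set.Icc a b) :
    hingeSum s w e c u - hingeSum s w e c v =
      (c + ∑ i ∈ s with e i ≤ a, w i) * (u - v) := by
  have hlin : ∀ z ∈ Set.Icc a b,
      ∑ i ∈ s, w i * max (z - e i) 0 = ∑ i ∈ s with e i ≤ a, w i * (z - e i) := by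
    intro z hz
    rw [Finset.sum_filter]
    refine Finset.sum_congr rfl fun i hi => ?_
    split_ifs with h
    · rw [max_eq_left (by linarith [hz.1])]
    · have : b ≤ e i := (hab i hi).resolve_left h
      rw [max_eq_right (by linarith [hz.2]), mul_zero]
  have hdiff : ∑ i ∈ s with e i ≤ a, w i * (u - e i) - ∑ i ∈ s with e i ≤ a, w i * (v - e i)
      = (∑ i ∈ s with e i ≤ a, w i) * (u - v) := by
    rw [← Finset.sum_sub_distrib, Finset.sum_mul]
    exact Finset.sum_congr rfl fun i _ => by ring
  simp only [hingeSum, hlin u hu, hlin v hv]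
  linarith

theorem exists_kink_hingeSum_le (hc : 0 ≤ c + ∑ i ∈ s, w i) {L t : ℝ} (ht : L ≤ t) :
    ∃ t' ∈ insert L (s.image e), L ≤ t' ∧ hingeSum s w e c t' ≤ hingeSum s w e c t := by
  set K := insert L (s.image e)
  have hLK : L ∈ (K.filter (· ≤ t)) := by simp [K, ht]
  set a := (K.filter (· ≤ t)).max' ⟨L, hLK⟩
  obtain ⟨haK, hat⟩ : a ∈ K ∧ a ≤ t := Finset.mem_filter.1 (Finset.max'_mem _ _)
  have hLa : L ≤ a := Finset.le_max' _ _ hLK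
  have hle_a : ∀ i ∈ s, e i ≤ t → e i ≤ a := fun i hi hit =>
    Finset.le_max' _ _ (by simp [K, hit, Finset.mem_image_of_mem e hi])
  rcases le_or_gt 0 (c + ∑ i ∈ s with e i ≤ a, w i) with hσ | hσ
  · refine ⟨a, haK, hLa, ?_⟩
    have h := hingeSum_sub_hingeSum (c := c) (w := w)
      (fun i hi => (le_or_gt (e i) t).imp (hle_a i hi) le_of_lt)
      (⟨hat, le_rfl⟩ : t ∈ Set.Icc a t) ⟨le_rfl, hat⟩
    nlinarith
  · -- a negative slope to the right of `a` forces a kink to the right of `t`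
    obtain ⟨i, hi, hai⟩ : ∃ i ∈ s, a < e i := by
      by_contra! h
      rw [Finset.filter_true_of_mem h] at hσ
      linarith
    have hKt : e i ∈ K.filter (t ≤ ·) := by
      simp only [Finset.mem_filter, K, Finset.mem_insert, Finset.mem_image]
      exact ⟨Or.inr ⟨i, hi, rfl⟩, le_of_not_gt fun h => (hle_a i hi h.le).not_gt hai⟩
    set b := (K.filter (t ≤ ·)).min' ⟨e i, hKt⟩
    obtain ⟨hbK, htb⟩ : b ∈ K ∧ t ≤ b := Finset.mem_filter.1 (Finset.min'_mem _ _)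
    refine ⟨b, hbK, ht.trans htb, ?_⟩
    have hab : ∀ j ∈ s, e j ≤ a ∨ b ≤ e j := fun j hj =>
      (le_or_gt (e j) t).imp (hle_a j hj) fun h => Finset.min'_le _ _
        (by simp [K, h.le, Finset.mem_image_of_mem e hj])
    have h := hingeSum_sub_hingeSum (c := c) (w := w) hab
      (⟨hat.trans htb, le_rfl⟩ : b ∈ Set.Icc a b) ⟨hat, htb⟩
    nlinarith

theorem exists_kink_sum_max_sub_le (hc : 0 ≤ c) {L t : ℝ} (ht : L ≤ t) :
    ∃ t' ∈ insert L (s.image e), L ≤ t' ∧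
      c * t' + ∑ i ∈ s, w i * max (e i - t') 0 ≤ c * t + ∑ i ∈ s, w i * max (e i - t) 0 := by
  have hflip : ∀ u, c * u + ∑ i ∈ s, w i * max (e i - u) 0 =
      hingeSum s w e (c - ∑ i ∈ s, w i) u + ∑ i ∈ s, w i * e i := by
    intro u
    have hmax : ∀ i, max (e i - u) 0 = max (u - e i) 0 - (u - e i) := fun i => by
      rcases le_total u (e i) with h | h <;> simp [h]
    simp only [hingeSum, hmax, mul_sub, Finset.sum_sub_distrib]
    rw [sub_mul, Finset.sum_mul]
    ring
  obtain ⟨t', ht'K, hLt', hle⟩ :=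
    exists_kink_hingeSum_le (c := c - ∑ i ∈ s, w i) (w := w) (e := e) (by linarith) ht
  exact ⟨t', ht'K, hLt', by rw [hflip, hflip]; linarith⟩

end Hinge

noncomputable def reducedDual {ι : Type*} (S₁ S₂ : Finset ι) (D : ι → ℝ) (Γ : ℝ)
    (q : ℝ × ℝ) : ℝ :=
  q.1 * Γ - q.2 + ∑ i ∈ S₁, max (q.2 - q.1 + D i) 0 + ∑ i ∈ S₂, max (D i - q.1) 0

section ReducedDual

variable {ι : Type*} {S₁ S₂ : Finset ι} {D : ι → ℝ} {Γ : ℝ}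

lemma exists_reducedDual_le_along_diagonal (hΓ : 1 ≤ Γ) {α β : ℝ} (hα : 0 ≤ α)
    (hβ : 0 ≤ β) :
    ∃ q : ℝ × ℝ, 0 ≤ q.1 ∧ 0 ≤ q.2 ∧ (q.1 = 0 ∨ q.2 = 0 ∨ q.1 ∈ S₂.image D) ∧
      reducedDual S₁ S₂ D Γ q ≤ reducedDual S₁ S₂ D Γ (α, β) := by
  have hshift : ∀ t, reducedDual S₁ S₂ D Γ (α + t, β + t) =
      (Γ - 1) * t + ∑ i ∈ S₂, 1 * max (D i - α - t) 0 +
        (α * Γ - β + ∑ i ∈ S₁, max (β - α + D i) 0) := by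
    intro t
    simp only [reducedDual, add_sub_add_right_eq_sub, sub_sub, one_mul]
    ring
  obtain ⟨t, ht, hLt, hle⟩ := exists_kink_sum_max_sub_le (s := S₂) (w := fun _ => 1)
    (e := fun i => D i - α) (sub_nonneg.2 hΓ) (neg_nonpos.2 (le_min hα hβ))
  refine ⟨(α + t, β + t), by linarith [min_le_left α β], by linarith [min_le_right α β], ?_, ?_⟩
  · rcases Finset.mem_insert.1 ht with rfl | ht
    · rcases min_choice α β with h | h <;> simp [h]
    · obtain ⟨i, hi, rfl⟩ := Finset.mem_image.1 ht
      exact Or.inr (Or.inr (Finset.mem_image.2 ⟨i, hi, by ring⟩))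
  · have h0 := hshift 0
    simp only [add_zero, mul_zero, sub_zero] at h0 hle
    linarith [hshift t]

lemma exists_reducedDual_le_along_axis [DecidableEq ι] (hS : Disjoint S₁ S₂) (hΓ : 0 ≤ Γ) {α : ℝ}
    (hα : 0 ≤ α) :
    ∃ a ∈ insert 0 ((S₁ ∪ S₂).image D),
      reducedDual S₁ S₂ D Γ (a, 0) ≤ reducedDual S₁ S₂ D Γ (α, 0) := by
  have hform : ∀ u, reducedDual S₁ S₂ D Γ (u, 0) =
      Γ * u + ∑ i ∈ S₁ ∪ S₂, 1 * max (D i - u) 0 := by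
    intro u
    simp only [reducedDual, Finset.sum_union hS, one_mul, zero_sub, neg_add_eq_sub]
    ring
  obtain ⟨a, ha, -, hle⟩ :=
    exists_kink_sum_max_sub_le (s := S₁ ∪ S₂) (w := fun _ => 1) (e := D) hΓ hα
  exact ⟨a, ha, by rw [hform, hform]; exact hle⟩

lemma exists_reducedDual_le_same_fst (hS₁ : S₁.Nonempty) (a : ℝ) {β : ℝ} (hβ : 0 ≤ β) :
    ∃ b ∈ insert 0 (S₁.image fun i => max (a - D i) 0),
      reducedDual S₁ S₂ D Γ (a, b) ≤ reducedDual S₁ S₂ D Γ (a, β) := by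
  have hform : ∀ b, reducedDual S₁ S₂ D Γ (a, b) =
      hingeSum S₁ (fun _ => 1) (fun i => a - D i) (-1) b +
        (a * Γ + ∑ i ∈ S₂, max (D i - a) 0) := by
    intro b
    have hS₁sum : ∑ i ∈ S₁, max (b - a + D i) 0 = ∑ i ∈ S₁, 1 * max (b - (a - D i)) 0 :=
      Finset.sum_congr rfl fun i _ => by ring_nf
    simp only [reducedDual, hingeSum, hS₁sum]
    ring
  have hslope : 0 ≤ -1 + ∑ i ∈ S₁, (1 : ℝ) := by
    have : (1 : ℝ) ≤ S₁.card := by exact_mod_cast hS₁.card_pos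
    simp only [Finset.sum_const, nsmul_eq_mul, mul_one]
    linarith
  obtain ⟨b, hb, h0b, hle⟩ := exists_kink_hingeSum_le hslope hβ
  refine ⟨b, ?_, by rw [hform, hform]; linarith⟩
  rcases Finset.mem_insert.1 hb with rfl | hb
  · exact Finset.mem_insert_self _ _
  · obtain ⟨i, hi, rfl⟩ := Finset.mem_image.1 hb
    exact Finset.mem_insert_of_mem (Finset.mem_image.2 ⟨i, hi, max_eq_left h0b⟩)

theorem exists_kink_reducedDual_le [DecidableEq ι] (hS : Disjoint S₁ S₂) (hS₁ : S₁.Nonempty)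
    (hΓ : 1 ≤ Γ) {α β : ℝ} (hα : 0 ≤ α) (hβ : 0 ≤ β) :
    ∃ a ∈ insert 0 ((S₁ ∪ S₂).image D), ∃ b ∈ insert 0 (S₁.image fun i => max (a - D i) 0),
      reducedDual S₁ S₂ D Γ (a, b) ≤ reducedDual S₁ S₂ D Γ (α, β) := by
  obtain ⟨⟨α', β'⟩, hα', hβ', hcase, hle⟩ := exists_reducedDual_le_along_diagonal hΓ hα hβ
  dsimp only at hα' hβ' hcase
  rcases hcase with rfl | rfl | hα'D
  · obtain ⟨b, hb, hle'⟩ := exists_reducedDual_le_same_fst hS₁ 0 hβ'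
    exact ⟨0, Finset.mem_insert_self _ _, b, hb, hle'.trans hle⟩
  · obtain ⟨a, ha, hle'⟩ := exists_reducedDual_le_along_axis hS (by linarith : (0 : ℝ) ≤ Γ) hα'
    exact ⟨a, ha, 0, Finset.mem_insert_self _ _, hle'.trans hle⟩
  · obtain ⟨b, hb, hle'⟩ := exists_reducedDual_le_same_fst hS₁ α' hβ'
    have hα'A : α' ∈ insert 0 ((S₁ ∪ S₂).image D) :=
      Finset.mem_insert_of_mem (Finset.image_subset_image Finset.subset_union_right hα'D)
    exact ⟨α', hα'A, b, hb, hle'.trans hle⟩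

end ReducedDual

lemma isLeast_image_inf'_of_forall_exists_le {α β : Type*} [LinearOrder β] {f : α → β}
    {Q : Set α} {P : Finset α} (hP : P.Nonempty) (hPQ : ∀ q ∈ P, q ∈ Q)
    (h : ∀ q ∈ Q, ∃ q' ∈ P, f q' ≤ f q) : IsLeast (f '' Q) (P.inf' hP f) := by
  obtain ⟨q₀, hq₀, hq₀eq⟩ := Finset.exists_mem_eq_inf' hP f
  refine ⟨⟨q₀, hPQ q₀ hq₀, hq₀eq.symm⟩, ?_⟩
  rintro _ ⟨q, hq, rfl⟩
  obtain ⟨q', hq', hle⟩ := h q hq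
  exact (Finset.inf'_le f hq').trans hle

lemma mul_max_add_sub_add_one_sub_mul_max {x : ℝ} (hx : x = 0 ∨ x = 1) (d α β : ℝ) :
    x * max (d + β - α) 0 + (1 - x) * max (β - α) 0 = max (β - α + x * d) 0 := by
  rcases hx with rfl | rfl <;> ring_nf

lemma mul_max_sub {x α : ℝ} (hx : x = 0 ∨ x = 1) (hα : 0 ≤ α) (d : ℝ) :
    x * max (d - α) 0 = max (x * d - α) 0 := by
  rcases hx with rfl | rfl
  · simp [hα]
  · simp

lemma dual_eq_reducedDual {ι : Type*} (S₁ S₂ : Finset ι) {d x : ι → ℝ}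
    (hx : ∀ i, x i = 0 ∨ x i = 1) (Γ : ℝ) {q : ℝ × ℝ} (hq : 0 ≤ q.1) :
    q.1 * Γ - q.2 +
        (∑ i ∈ S₁, (x i * max (d i + q.2 - q.1) 0 + (1 - x i) * max (q.2 - q.1) 0)) +
        ∑ i ∈ S₂, x i * max (d i - q.1) 0 =
      reducedDual S₁ S₂ (fun i => x i * d i) Γ q := by
  simp only [reducedDual, mul_max_add_sub_add_one_sub_mul_max (hx _)]
  -- only now: `mul_max_sub` would also match inside the first family
  simp only [mul_max_sub (hx _) hq]

section Kinkpoints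

variable {n m p : ℕ} {d x : Fin n → ℝ}

lemma kinkA_nonneg (hd : ∀ i : Fin n, m ≤ i.val → 0 ≤ d i) {a : ℝ} (ha : a ∈ kinkA n m d) :
    0 ≤ a := by
  simp only [kinkA, Finset.mem_insert, Finset.mem_image, Finset.mem_filter,
    Finset.mem_univ, true_and] at ha
  rcases ha with rfl | ⟨i, hi, rfl⟩
  exacts [le_rfl, hd i hi]

lemma kinkP_nonneg (hd : ∀ i : Fin n, m ≤ i.val → 0 ≤ d i) {q : ℝ × ℝ}
    (hq : q ∈ kinkP n m p d) : 0 ≤ q.1 ∧ 0 ≤ q.2 := by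
  simp only [kinkP, Finset.mem_union, Finset.mem_product, Finset.mem_singleton,
    Finset.mem_image] at hq
  rcases hq with (⟨ha, hb⟩ | ⟨a, ha, rfl⟩) | ⟨⟨a, i⟩, ⟨ha, -⟩, rfl⟩
  · exact ⟨kinkA_nonneg hd ha, hb.ge⟩
  · exact ⟨kinkA_nonneg hd ha, kinkA_nonneg hd ha⟩
  · exact ⟨kinkA_nonneg hd ha, le_max_right _ _⟩

lemma mem_kinkA_of_mem_insert_image (hmp : m < p) (hx : ∀ i, x i = 0 ∨ x i = 1) {a : ℝ}
    (ha : a ∈ insert 0 ((univ.filter (fun i : Fin n => m ≤ i.val ∧ i.val < p) ∪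
      univ.filter (fun i : Fin n => p ≤ i.val)).image fun i => x i * d i)) :
    a ∈ kinkA n m d := by
  simp only [Finset.mem_insert, Finset.mem_image, Finset.mem_union, Finset.mem_filter,
    Finset.mem_univ, true_and] at ha
  rcases ha with rfl | ⟨i, hi, rfl⟩
  · exact Finset.mem_insert_self _ _
  · have him : m ≤ i.val := by omega
    rcases hx i with h | h
    · rw [h, zero_mul]
      exact Finset.mem_insert_self _ _
    · rw [h, one_mul]
      exact Finset.mem_insert_of_mem (Finset.mem_image_of_mem d (by simpa using him))

lemma mem_kinkP_of_mem_insert_image (hd : ∀ i : Fin n, m ≤ i.val → 0 ≤ d i)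
    (hx : ∀ i, x i = 0 ∨ x i = 1) {a b : ℝ} (ha : a ∈ kinkA n m d)
    (hb : b ∈ insert 0 ((univ.filter fun i : Fin n => m ≤ i.val ∧ i.val < p).image
      fun i => max (a - x i * d i) 0)) :
    (a, b) ∈ kinkP n m p d := by
  simp only [Finset.mem_insert, Finset.mem_image, Finset.mem_filter,
    Finset.mem_univ, true_and] at hb
  simp only [kinkP, Finset.mem_union, Finset.mem_product, Finset.mem_singleton,
    Finset.mem_image, Prod.mk.injEq, Prod.exists]
  rcases hb with rfl | ⟨i, hi, rfl⟩
  · exact Or.inl (Or.inl ⟨ha, rfl⟩)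
  · rcases hx i with h | h
    · simp only [h, zero_mul, sub_zero, max_eq_left (kinkA_nonneg hd ha)]
      exact Or.inl (Or.inr ⟨a, ha, rfl, rfl⟩)
    · simp only [h, one_mul]
      exact Or.inr ⟨a, i, ⟨ha, by simpa using hi⟩, rfl, rfl⟩

end Kinkpoints

theorem dual_objective_min_at_kinkpoints_general (n m p : ℕ)
    (hmp : m < p) (hpn : p ≤ n)
    (d : Fin n → ℝ) (hd : ∀ i : Fin n, m ≤ i.val → 0 ≤ d i)
    (x : Fin n → ℝ) (hx : ∀ i, x i = 0 ∨ x i = 1)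
    (Γ : ℝ) (hΓ : 1 ≤ Γ) :
    let g : ℝ × ℝ → ℝ := fun q =>
      q.1 * Γ - q.2 +
        (∑ i ∈ Finset.univ.filter fun i : Fin n => m ≤ i.val ∧ i.val < p,
          (x i * max (d i + q.2 - q.1) 0 + (1 - x i) * max (q.2 - q.1) 0)) +
        ∑ i ∈ Finset.univ.filter fun i : Fin n => p ≤ i.val,
          x i * max (d i - q.1) 0
    let Q : Set (ℝ × ℝ) := {q | 0 ≤ q.1 ∧ 0 ≤ q.2}
    BddBelow (g '' Q) ∧
    (∃ q ∈ Q, ∀ q' ∈ Q, g q ≤ g q') ∧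
    sInf (g '' Q) = (kinkP n m p d).inf' (kinkP_nonempty n m p d) g := by
  intro g Q
  have hS : Disjoint (univ.filter fun i : Fin n => m ≤ i.val ∧ i.val < p)
      (univ.filter fun i : Fin n => p ≤ i.val) := by
    simp only [Finset.disjoint_filter]
    omega
  have hS₁ : (univ.filter fun i : Fin n => m ≤ i.val ∧ i.val < p).Nonempty :=
    ⟨⟨m, by omega⟩, by simp [hmp]⟩
  have hg : ∀ q ∈ Q, g q = reducedDual _ _ (fun i => x i * d i) Γ q :=
    fun q hq => dual_eq_reducedDual _ _ hx Γ hq.1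
  have hleast := isLeast_image_inf'_of_forall_exists_le (f := g) (kinkP_nonempty n m p d)
    (fun q hq => kinkP_nonneg hd hq) fun q hq => by
      obtain ⟨a, ha, b, hb, hle⟩ := exists_kink_reducedDual_le hS hS₁ hΓ hq.1 hq.2
      have hab := mem_kinkP_of_mem_insert_image hd hx (mem_kinkA_of_mem_insert_image hmp hx ha) hb
      exact ⟨(a, b), hab, by rwa [hg _ (kinkP_nonneg hd hab), hg q hq]⟩
  obtain ⟨q₀, hq₀, hq₀eq⟩ := hleast.1
  exact ⟨hleast.bddBelow, ⟨q₀, hq₀, fun q hq => hq₀eq ▸ hleast.2 ⟨q, hq, rfl⟩⟩,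
    hleast.csInf_eq⟩

/-- the dual objective `g` is bounded below on the nonnegative
quadrant, attains its infimum there, and its infimum equals the minimum of `g`
over the finite set `P` of kinkpoints. -/
theorem dual_objective_min_at_kinkpoints (n m p : ℕ) (hn : 1 ≤ n)
    (hmp : m < p) (hpn : p ≤ n)
    (d : Fin n → ℝ) (hd : ∀ i : Fin n, m ≤ i.val → 0 ≤ d i)
    (x : Fin n → ℝ) (hx : ∀ i, x i = 0 ∨ x i = 1)
    (Γ : ℝ) (hΓ : 1 ≤ Γ) :
    let g : ℝ × ℝ → ℝ := fun q =>
      q.1 * Γ - q.2 +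
        (∑ i ∈ Finset.univ.filter fun i : Fin n => m ≤ i.val ∧ i.val < p,
          (x i * max (d i + q.2 - q.1) 0 + (1 - x i) * max (q.2 - q.1) 0)) +
        ∑ i ∈ Finset.univ.filter fun i : Fin n => p ≤ i.val,
          x i * max (d i - q.1) 0
    let Q : Set (ℝ × ℝ) := {q | 0 ≤ q.1 ∧ 0 ≤ q.2}
    BddBelow (g '' Q) ∧
    (∃ q ∈ Q, ∀ q' ∈ Q, g q ≤ g q') ∧
    sInf (g '' Q) = (kinkP n m p d).inf' (kinkP_nonempty n m p d) g :=
  dual_objective_min_at_kinkpoints_general n m p hmp hpn d hd x hx Γ hΓ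
end
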